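/- arXiv:1310.7153 — 7 statements merged into one kernel-verified Lean document; each statement's English description precedes it below -/
import Mathlib

section
/- Let (X,d) be a complete metric space and let φ : X → [0,∞) be a locally bounded function. Let ε > 0 and τ > 1. Then for every a ∈ X with φ(a) > 0 there exists a point ã ∈ X such that: (i) d(a, ã) ≤ τ/(ε·φ(a)·(τ−1)); (ii) φ(ã) ≥ φ(a); and (iii) φ(x) ≤ τ·φ(ã) for every x ∈ X with d(x, ã) ≤ 1/(ε·φ(ã)). -/
open Filter Topology

/-!
Argue by contradiction. If no point `b` in the ball of radius `τ / (ε φ(a) (τ - 1))` around `a`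
with `φ b ≥ φ a` works, each such `b` has a point `x` within `1 / (ε φ(b))` of it with
`φ x > τ φ(b)`. Iterating from `a` gives points `b_n` with `φ(b_n) ≥ τ^n φ(a)` and
`d(b_n, b_{n+1}) ≤ τ^{-n} / (ε φ(a))`; these steps sum to exactly the radius of the ball, so the
iteration never leaves it. The sequence is Cauchy, hence converges, while `φ(b_n) → ∞`,
contradicting local boundedness at the limit.
-/

theorem exists_seq_mem_tendsto_of_dist_le_geometric {X : Type*} [PseudoMetricSpace X]
    [CompleteSpace X] (S : ℕ → Set X) {c r : ℝ} (hr : r < 1) {x₀ : X} (hx₀ : x₀ ∈ S 0)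
    (hstep : ∀ n, ∀ x ∈ S n, ∃ y ∈ S (n + 1), dist x y ≤ c * r ^ n) :
    ∃ u : ℕ → X, (∀ n, u n ∈ S n) ∧ ∃ p, Tendsto u atTop (𝓝 p) := by
  choose g hgS hgdist using hstep
  let v : (n : ℕ) → S n := fun n => Nat.rec ⟨x₀, hx₀⟩ (fun n x => ⟨g n x x.2, hgS n x x.2⟩) n
  have hv : CauchySeq fun n => (v n).1 := by
    refine cauchySeq_of_le_geometric r c hr fun n => ?_
    exact hgdist n _ (v n).2
  exact ⟨fun n => (v n).1, fun n => (v n).2, cauchySeq_tendsto_of_complete hv⟩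

theorem not_tendsto_atTop_of_locallyBounded {X ι : Type*} [TopologicalSpace X] {φ : X → ℝ}
    (hφ : ∀ x, ∃ C, ∀ᶠ y in 𝓝 x, φ y ≤ C) {l : Filter ι} [l.NeBot] {u : ι → X} {p : X}
    (hu : Tendsto u l (𝓝 p)) : ¬ Tendsto (φ ∘ u) l atTop := by
  intro hφu
  obtain ⟨C, hC⟩ := hφ p
  obtain ⟨n, hn, hn'⟩ := ((hu.eventually hC).and (hφu.eventually_gt_atTop C)).exists
  exact (hn.trans_lt hn').false

theorem geometric_radius_succ {τ : ℝ} (hτ : 1 < τ) (K : ℝ) (n : ℕ) :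
    τ / (K * (τ - 1)) * (1 - τ⁻¹ ^ (n + 1)) =
      τ / (K * (τ - 1)) * (1 - τ⁻¹ ^ n) + K⁻¹ * τ⁻¹ ^ n := by
  have hτ₀ : τ ≠ 0 := by positivity
  have hτ₁ : τ - 1 ≠ 0 := sub_ne_zero.mpr hτ.ne'
  rw [pow_succ]
  field_simp
  ring

theorem one_div_le_of_pow_mul_le {τ ε s t : ℝ} (hτ : 0 < τ) (hε : 0 < ε) (hs : 0 < s) {n : ℕ}
    (hst : τ ^ n * s ≤ t) : 1 / (ε * t) ≤ (ε * s)⁻¹ * τ⁻¹ ^ n := by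
  rw [inv_pow, ← mul_inv, one_div]
  refine inv_anti₀ (by positivity) ?_
  rw [mul_assoc, mul_comm s]
  exact mul_le_mul_of_nonneg_left hst hε.le

theorem stmt0_general {X : Type*} [MetricSpace X] [CompleteSpace X]
    (φ : X → ℝ)
    (hφ_locbdd : ∀ x : X, ∃ C : ℝ, ∀ᶠ y in 𝓝 x, φ y ≤ C)
    (ε τ : ℝ) (hε : 0 < ε) (hτ : 1 < τ)
    (a : X) (ha : 0 < φ a) :
    ∃ b : X,
      dist a b ≤ τ / (ε * φ a * (τ - 1)) ∧
      φ a ≤ φ b ∧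
      ∀ x : X, dist x b ≤ 1 / (ε * φ b) → φ x ≤ τ * φ b := by
  by_contra! hbad
  set R := τ / (ε * φ a * (τ - 1))
  have hR : 0 < R := by have := sub_pos.mpr hτ; positivity
  let S : ℕ → Set X := fun n =>
    {b | τ ^ n * φ a ≤ φ b ∧ dist a b ≤ R * (1 - τ⁻¹ ^ n)}
  have hS₀ : a ∈ S 0 := by simp [S]
  have hstep : ∀ n, ∀ b ∈ S n, ∃ x ∈ S (n + 1), dist b x ≤ (ε * φ a)⁻¹ * τ⁻¹ ^ n := by
    rintro n b ⟨hφb, hab⟩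
    have hab_le : dist a b ≤ R :=
      hab.trans <| mul_le_of_le_one_right hR.le <| sub_le_self _ (by positivity)
    obtain ⟨x, hxb, hφx⟩ :=
      hbad b hab_le ((le_mul_of_one_le_left ha.le (one_le_pow₀ hτ.le)).trans hφb)
    have hbx : dist b x ≤ (ε * φ a)⁻¹ * τ⁻¹ ^ n :=
      dist_comm b x ▸ hxb.trans (one_div_le_of_pow_mul_le (zero_lt_one.trans hτ) hε ha hφb)
    refine ⟨x, ⟨?_, ?_⟩, hbx⟩
    · rw [pow_succ', mul_assoc]
      exact (mul_le_mul_of_nonneg_left hφb (by positivity)).trans hφx.le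
    · rw [geometric_radius_succ hτ]
      exact (dist_triangle a b x).trans (add_le_add hab hbx)
  obtain ⟨u, hu, p, hup⟩ :=
    exists_seq_mem_tendsto_of_dist_le_geometric S (inv_lt_one_of_one_lt₀ hτ) hS₀ hstep
  have hφu : Tendsto (φ ∘ u) atTop atTop :=
    tendsto_atTop_mono (fun n => (hu n).1) <|
      (tendsto_pow_atTop_atTop_of_one_lt hτ).atTop_mul_const ha
  exact not_tendsto_atTop_of_locallyBounded hφ_locbdd hup hφu

/-- **Berteloot–Duval type localization lemma.**
Let `(X, d)` be a complete metric space and `φ : X → [0,∞)` a locally bounded function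
(every point has a neighborhood on which `φ` is bounded). Let `ε > 0` and `τ > 1`.
Then for every `a ∈ X` with `φ a > 0` there is `b ∈ X` such that
(i) `d(a,b) ≤ τ/(ε·φ(a)·(τ-1))`, (ii) `φ b ≥ φ a`, and
(iii) `φ x ≤ τ·φ b` whenever `d(x,b) ≤ 1/(ε·φ b)`. -/
theorem stmt0 {X : Type*} [MetricSpace X] [CompleteSpace X]
    (φ : X → ℝ) (hφ_nonneg : ∀ x, 0 ≤ φ x)
    (hφ_locbdd : ∀ x : X, ∃ C : ℝ, ∀ᶠ y in 𝓝 x, φ y ≤ C)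
    (ε τ : ℝ) (hε : 0 < ε) (hτ : 1 < τ)
    (a : X) (ha : 0 < φ a) :
    ∃ b : X,
      dist a b ≤ τ / (ε * φ a * (τ - 1)) ∧
      φ a ≤ φ b ∧
      ∀ x : X, dist x b ≤ 1 / (ε * φ b) → φ x ≤ τ * φ b :=
  stmt0_general φ hφ_locbdd ε τ hε hτ a ha
end

section
/- For every n ≥ 2 and every length function E on ℂⁿ, the space ℂⁿ is not of E-limit type: there exists a sequence of holomorphic maps F = {f_m} from the unit disc Δ to ℂⁿ that is not normal and not compactly divergent, and for which there do NOT exist sequences p_j ∈ Δ with p_j → p₀ ∈ Δ, indices selecting f_j ∈ F, and ρ_j > 0 with ρ_j → 0⁺ such that g_j(ξ) := f_j(p_j + ρ_j ξ) converges uniformly on every compact subset of ℂ to a non-constant E-Brody curve g : ℂ → ℂⁿ. -/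
/-!
Take `f m z = Γ (m z)`, where `Γ w = (w, φ w, 0, …, 0)` is the graph of an entire function `φ`.
All `f m` vanish at `0`, so the family is not compactly divergent, while the first coordinate
`m z` blows up, so it is not normal. The first coordinates of a rescaling
`f (idx j) (p j + ρ j ξ)` are affine in `ξ`, so any limit is `Γ (b + a ξ)`, and for `a ≠ 0` it
is an `E`-Brody curve only if `w ↦ E (Γ w) (Γ' w)` is bounded. Homogeneity makes
`E ((k, 0, …), (1, t, 0, …))` grow like `|t|`, so it suffices that `φ` vanishes on `ℕ` with
`|φ' k|` beyond a threshold depending on `k` and `E`; `φ z = sin (2πz) ψ z` does this for an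
entire `ψ` that is large enough on `ℕ`, such as `∑ c_j ((z + 1) / (j + 1)) ^ (j + ⌈c_j⌉)`.
-/

open Filter Topology Metric Bornology Real

theorem tendsto_add_smul_cobounded_atTop_of_homogeneous {𝕜 V : Type*} [NontriviallyNormedField 𝕜]
    [NormedAddCommGroup V] [NormedSpace 𝕜 V] {N : V → ℝ}
    (hhom : ∀ (a : 𝕜) (v : V), N (a • v) = ‖a‖ * N v) (u : V) {w : V} (hN : ContinuousAt N w)
    (hw : 0 < N w) : Tendsto (fun t : 𝕜 => N (u + t • w)) (cobounded 𝕜) atTop := by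
  -- `N (u + t • w) = ‖t‖ * N (t⁻¹ • u + w)` and the second factor tends to `N w > 0`.
  have hlim : Tendsto (fun t : 𝕜 => N (t⁻¹ • u + w)) (cobounded 𝕜) (𝓝 (N w)) := by
    refine hN.tendsto.comp ?_
    simpa using (((tendsto_inv₀_cobounded (α := 𝕜)).smul_const u).add_const w)
  refine (tendsto_norm_cobounded_atTop.atTop_mul_pos hw hlim).congr' ?_
  filter_upwards [tendsto_norm_cobounded_atTop.eventually_gt_atTop 0] with t ht
  rw [← hhom, smul_add, smul_inv_smul₀ (norm_pos_iff.1 ht)]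

theorem eq_add_mul_of_tendsto {R ι : Type*} [Ring R] [TopologicalSpace R] [IsTopologicalRing R]
    [T2Space R] {l : Filter ι} [l.NeBot] {x y : ι → R} {h : R → R}
    (hlim : ∀ ξ, Tendsto (fun j => x j + y j * ξ) l (𝓝 (h ξ))) (ξ : R) :
    h ξ = h 0 + (h 1 - h 0) * ξ := by
  have hx : Tendsto x l (𝓝 (h 0)) := by simpa using hlim 0
  have hy : Tendsto y l (𝓝 (h 1 - h 0)) := by simpa using (hlim 1).sub hx
  exact tendsto_nhds_unique (hlim ξ) (hx.add (hy.mul_const ξ))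

theorem mul_half_pow_natCeil_le_one (c : ℝ) : c * (1 / 2) ^ ⌈c⌉₊ ≤ 1 := by
  have hc : c ≤ 2 ^ ⌈c⌉₊ :=
    (Nat.le_ceil c).trans (by exact_mod_cast (Nat.lt_two_pow_self (n := ⌈c⌉₊)).le)
  rw [one_div, inv_pow, ← div_eq_mul_inv]
  exact div_le_one_of_le₀ hc (by positivity)

theorem summable_mul_div_pow_add_natCeil {c : ℕ → ℝ} (hc : ∀ j, 0 ≤ c j) (R : ℝ) :
    Summable fun j : ℕ => c j * (R / (j + 1)) ^ (j + ⌈c j⌉₊) := by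
  -- The extra `⌈c j⌉₊` in the exponent absorbs the coefficient `c j`.
  refine summable_geometric_two.of_norm_bounded_eventually_nat ?_
  filter_upwards [eventually_ge_atTop ⌈2 * |R|⌉₊] with j hj
  have hRj : |R| / (j + 1) ≤ 1 / 2 := by
    rw [div_le_div_iff₀ (by positivity) two_pos]
    linarith [(Nat.ceil_le.1 hj)]
  calc ‖c j * (R / (j + 1)) ^ (j + ⌈c j⌉₊)‖
      = c j * (|R| / (j + 1)) ^ (j + ⌈c j⌉₊) := by
        rw [norm_mul, norm_pow, norm_div, Real.norm_of_nonneg (hc j), Real.norm_eq_abs,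
          Real.norm_of_nonneg (by positivity)]
    _ ≤ c j * (1 / 2) ^ (j + ⌈c j⌉₊) := by have := hc j; gcongr
    _ = (c j * (1 / 2) ^ ⌈c j⌉₊) * (1 / 2) ^ j := by ring
    _ ≤ (1 / 2) ^ j := mul_le_of_le_one_left (by positivity) (mul_half_pow_natCeil_le_one _)

theorem exists_differentiable_le_norm_natCast (T : ℕ → ℝ) :
    ∃ ψ : ℂ → ℂ, Differentiable ℂ ψ ∧ ∀ k : ℕ, T k ≤ ‖ψ k‖ := by
  set c : ℕ → ℝ := fun j => max (T j) 0
  have hc : ∀ j, 0 ≤ c j := fun j => le_max_right _ _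
  set e : ℕ → ℕ := fun j => j + ⌈c j⌉₊
  refine ⟨fun z => ∑' j, (c j : ℂ) * ((z + 1) / (j + 1)) ^ e j, fun z => ?_, fun k => ?_⟩
  · have hz : z ∈ ball (0 : ℂ) (‖z‖ + 1) := by simp
    refine (Complex.differentiableOn_tsum_of_summable_norm
      (summable_mul_div_pow_add_natCeil hc (‖z‖ + 2)) (fun j => by fun_prop) isOpen_ball
      fun j w hw => ?_).differentiableAt (isOpen_ball.mem_nhds hz)
    have hw : ‖w + 1‖ ≤ ‖z‖ + 2 := by
      rw [mem_ball_zero_iff] at hw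
      linarith [norm_add_le w 1, norm_one (α := ℂ)]
    rw [norm_mul, norm_pow, norm_div, Complex.norm_real, Real.norm_of_nonneg (hc j)]
    have : ‖((j : ℂ) + 1)‖ = j + 1 := by exact_mod_cast Complex.norm_natCast (j + 1)
    rw [this]
    gcongr
  · have hsum := summable_mul_div_pow_add_natCeil hc (k + 1)
    have hψk : ∑' j, (c j : ℂ) * (((k : ℂ) + 1) / (j + 1)) ^ e j
        = ((∑' j, c j * (((k : ℝ) + 1) / (j + 1)) ^ e j : ℝ) : ℂ) := by
      push_cast [Complex.ofReal_tsum]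
      rfl
    beta_reduce
    rw [hψk, Complex.norm_real, Real.norm_of_nonneg (tsum_nonneg fun j => by positivity)]
    calc T k ≤ c k * (((k : ℝ) + 1) / (k + 1)) ^ e k := by
          rw [div_self (by positivity), one_pow, mul_one]; exact le_max_left _ _
      _ ≤ _ := hsum.le_tsum k fun j _ => by positivity

theorem exists_differentiable_eq_zero_le_norm_deriv (T : ℕ → ℝ) :
    ∃ φ : ℂ → ℂ, Differentiable ℂ φ ∧ ∀ k : ℕ, φ k = 0 ∧ T k ≤ ‖deriv φ k‖ := by
  obtain ⟨ψ, hψ, hψT⟩ := exists_differentiable_le_norm_natCast T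
  have hφ : ∀ z, HasDerivAt (fun z => Complex.sin (2 * π * z) * ψ z)
      (Complex.cos (2 * π * z) * (2 * π) * ψ z + Complex.sin (2 * π * z) * deriv ψ z) z :=
    fun z => ((hasDerivAt_id' z).const_mul _).csin.congr_deriv (by ring) |>.mul (hψ z).hasDerivAt
  have hsin (k : ℕ) : Complex.sin (2 * π * k) = 0 := by
    rw [show (2 * π * k : ℂ) = ((2 * k : ℕ) : ℂ) * π by push_cast; ring]
    exact Complex.sin_nat_mul_pi _
  have hcos (k : ℕ) : Complex.cos (2 * π * k) = 1 := by
    rw [show (2 * π * k : ℂ) = k * (2 * π) by ring]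
    exact Complex.cos_nat_mul_two_pi k
  refine ⟨_, fun z => (hφ z).differentiableAt, fun k => ⟨by simp [hsin], ?_⟩⟩
  have h2π : (1 : ℝ) ≤ ‖(2 * π : ℂ)‖ := by
    rw [show (2 * π : ℂ) = ((2 * π : ℝ) : ℂ) by push_cast; rfl, Complex.norm_real,
      Real.norm_of_nonneg (by positivity)]
    linarith [pi_gt_three]
  calc T k ≤ ‖ψ k‖ := hψT k
    _ ≤ ‖(2 * π : ℂ)‖ * ‖ψ k‖ := le_mul_of_one_le_left (norm_nonneg _) h2π
    _ = ‖deriv _ (k : ℂ)‖ := by rw [(hφ k).deriv, hsin, hcos, ← norm_mul]; ring_nf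

def graphMap {ι : Type*} [DecidableEq ι] (i₀ i₁ : ι) (φ : ℂ → ℂ) (w : ℂ) : ι → ℂ :=
  w • Pi.single i₀ 1 + φ w • Pi.single i₁ 1

section graphMap

variable {ι : Type*} [DecidableEq ι] {i₀ i₁ : ι} {φ : ℂ → ℂ}

theorem graphMap_apply_left (h : i₀ ≠ i₁) (w : ℂ) : graphMap i₀ i₁ φ w i₀ = w := by
  simp [graphMap, h]

theorem graphMap_of_eq_zero {w : ℂ} (hw : φ w = 0) :
    graphMap i₀ i₁ φ w = w • Pi.single i₀ 1 := by
  simp [graphMap, hw]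

theorem Continuous.graphMap (hφ : Continuous φ) : Continuous (graphMap i₀ i₁ φ) := by
  unfold _root_.graphMap; fun_prop

theorem HasDerivAt.graphMap [Fintype ι] {d w : ℂ} (hφ : HasDerivAt φ d w) :
    HasDerivAt (graphMap i₀ i₁ φ) (Pi.single i₀ 1 + d • Pi.single i₁ 1) w := by
  have h := ((hasDerivAt_id w).smul_const (Pi.single i₀ 1 : ι → ℂ)).fun_add
    (hφ.smul_const (Pi.single i₁ 1 : ι → ℂ))
  rw [one_smul] at h
  exact h

theorem Differentiable.graphMap [Fintype ι] (hφ : Differentiable ℂ φ) :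
    Differentiable ℂ (graphMap i₀ i₁ φ) :=
  fun w => (hφ w).hasDerivAt.graphMap.differentiableAt

theorem exists_eq_graphMap_add_mul_of_tendsto (h : i₀ ≠ i₁) (hφ : Continuous φ)
    {x y : ℕ → ℂ} {g : ℂ → ι → ℂ}
    (hlim : ∀ ξ, Tendsto (fun j => graphMap i₀ i₁ φ (x j + y j * ξ)) atTop (𝓝 (g ξ))) :
    ∃ b a : ℂ, ∀ ξ, g ξ = graphMap i₀ i₁ φ (b + a * ξ) := by
  have hcoord (ξ : ℂ) : Tendsto (fun j => x j + y j * ξ) atTop (𝓝 (g ξ i₀)) := by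
    simpa [Function.comp_def, graphMap_apply_left h] using
      ((continuous_apply i₀).tendsto _).comp (hlim ξ)
  refine ⟨g 0 i₀, g 1 i₀ - g 0 i₀, fun ξ => tendsto_nhds_unique (hlim ξ) ?_⟩
  rw [← eq_add_mul_of_tendsto hcoord ξ]
  exact (hφ.graphMap.tendsto _).comp (hcoord ξ)

end graphMap

theorem norm_mul_le_of_comp_add_mul_le {V : Type*} [NormedAddCommGroup V] [NormedSpace ℂ V]
    {E : V → V → ℝ} (hEhom : ∀ z (a : ℂ) v, E z (a • v) = ‖a‖ * E z v) {Γ : ℂ → V}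
    {a b : ℂ} (ha : a ≠ 0) {C : ℝ}
    (hC : ∀ ξ, E (Γ (b + a * ξ)) (deriv (fun ξ => Γ (b + a * ξ)) ξ) ≤ C) (w : ℂ) :
    ‖a‖ * E (Γ w) (deriv Γ w) ≤ C := by
  have hw : b + a * ((w - b) / a) = w := by field_simp; ring
  have hderiv (ξ : ℂ) : deriv (fun ξ => Γ (b + a * ξ)) ξ = a • deriv Γ (b + a * ξ) := by
    rw [deriv_comp_mul_left a (fun u => Γ (b + u)) ξ, deriv_comp_const_add]
  simpa [hderiv, hEhom, hw] using hC ((w - b) / a)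

theorem exists_natCast_le_graphMap_deriv {ι : Type*} [Fintype ι] [DecidableEq ι] (i₀ i₁ : ι)
    {E : (ι → ℂ) → (ι → ℂ) → ℝ} (hEcont : ∀ z, Continuous (E z))
    (hEpos : ∀ z v, v ≠ 0 → 0 < E z v) (hEhom : ∀ z (a : ℂ) v, E z (a • v) = ‖a‖ * E z v) :
    ∃ φ : ℂ → ℂ, Differentiable ℂ φ ∧ (∀ k : ℕ, φ k = 0) ∧
      ∀ k : ℕ, (k : ℝ) ≤ E (graphMap i₀ i₁ φ k) (deriv (graphMap i₀ i₁ φ) k) := by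
  have hT (k : ℕ) : ∃ T : ℝ, ∀ t : ℂ, T ≤ ‖t‖ →
      (k : ℝ) ≤ E ((k : ℂ) • Pi.single i₀ 1) (Pi.single i₀ 1 + t • Pi.single i₁ 1) := by
    have hlim := tendsto_add_smul_cobounded_atTop_of_homogeneous
      (N := E ((k : ℂ) • Pi.single i₀ 1)) (hEhom _) (Pi.single i₀ 1) (hEcont _).continuousAt
      (hEpos _ (Pi.single i₁ 1) (by simp))
    simpa using hasBasis_cobounded_norm.eventually_iff.1 (hlim.eventually_ge_atTop (k : ℝ))
  choose T hT using hT
  obtain ⟨φ, hφ, hφk⟩ := exists_differentiable_eq_zero_le_norm_deriv T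
  refine ⟨φ, hφ, fun k => (hφk k).1, fun k => ?_⟩
  rw [graphMap_of_eq_zero (hφk k).1, (hφ k).hasDerivAt.graphMap.deriv]
  exact hT k _ (hφk k).2

theorem exists_const_of_tendsto_graphMap {ι : Type*} [Fintype ι] [DecidableEq ι] {i₀ i₁ : ι}
    (h : i₀ ≠ i₁) {φ : ℂ → ℂ} (hφ : Continuous φ) {E : (ι → ℂ) → (ι → ℂ) → ℝ}
    (hEhom : ∀ z (a : ℂ) v, E z (a • v) = ‖a‖ * E z v)
    (hE : ∀ k : ℕ, (k : ℝ) ≤ E (graphMap i₀ i₁ φ k) (deriv (graphMap i₀ i₁ φ) k))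
    {x y : ℕ → ℂ} {g : ℂ → ι → ℂ}
    (hlim : ∀ ξ, Tendsto (fun j => graphMap i₀ i₁ φ (x j + y j * ξ)) atTop (𝓝 (g ξ)))
    {C : ℝ} (hC : ∀ ξ, E (g ξ) (deriv g ξ) ≤ C) : ∃ c, ∀ ξ, g ξ = c := by
  obtain ⟨b, a, hg⟩ := exists_eq_graphMap_add_mul_of_tendsto h hφ hlim
  rcases eq_or_ne a 0 with rfl | ha
  · exact ⟨graphMap i₀ i₁ φ b, fun ξ => by simp [hg]⟩
  rw [show g = fun ξ => graphMap i₀ i₁ φ (b + a * ξ) from funext hg] at hC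
  obtain ⟨k, hk⟩ := exists_nat_gt (C / ‖a‖)
  have hCk := (mul_le_mul_of_nonneg_left (hE k) (norm_nonneg a)).trans
    (norm_mul_le_of_comp_add_mul_le hEhom ha hC k)
  rw [div_lt_iff₀ (norm_pos_iff.2 ha)] at hk
  linarith

theorem not_tendsto_natCast_mul {σ : ℕ → ℕ} (hσ : StrictMono σ) {z : ℂ} (hz : z ≠ 0) (c : ℂ) :
    ¬ Tendsto (fun j => (σ j : ℂ) * z) atTop (𝓝 c) := fun h => by
  refine not_tendsto_atTop_of_tendsto_nhds (h.norm) ?_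
  simp only [norm_mul, Complex.norm_natCast]
  exact (tendsto_natCast_atTop_atTop.comp hσ.tendsto_atTop).atTop_mul_const (norm_pos_iff.2 hz)

/-- **`ℂⁿ` (n ≥ 2) is not of `E`-limit type for any length function `E`.**
There is a family `{f m}` of holomorphic maps from the unit disc to `ℂⁿ` which is
not normal and not compactly divergent, but for which no rescaled sequence
`ξ ↦ f (idx j) (p j + ρ j • ξ)` (with `p j → p₀` in the disc, `ρ j → 0⁺`)
converges uniformly on compact subsets of `ℂ` to a non-constant `E`-Brody curve. -/
theorem stmt1 (n : ℕ) (hn : 2 ≤ n)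
    (E : (Fin n → ℂ) → (Fin n → ℂ) → ℝ)
    (hEcont : Continuous fun p : (Fin n → ℂ) × (Fin n → ℂ) => E p.1 p.2)
    (hEnonneg : ∀ z v, 0 ≤ E z v)
    (hEzero : ∀ z v, E z v = 0 ↔ v = 0)
    (hEhom : ∀ (z : Fin n → ℂ) (a : ℂ) (v : Fin n → ℂ), E z (a • v) = ‖a‖ * E z v) :
    ∃ f : ℕ → ℂ → (Fin n → ℂ),
      -- each member is holomorphic on the unit disc
      (∀ m, DifferentiableOn ℂ (f m) (ball (0 : ℂ) 1)) ∧
      -- the family is not normal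
      (¬ ∀ s : ℕ → ℕ, ∃ (σ : ℕ → ℕ) (g : ℂ → (Fin n → ℂ)), StrictMono σ ∧
          DifferentiableOn ℂ g (ball (0 : ℂ) 1) ∧
          ∀ K ⊆ ball (0 : ℂ) 1, IsCompact K →
            TendstoUniformlyOn (fun j => f (s (σ j))) g atTop K) ∧
      -- the family is not compactly divergent (contains no compactly divergent sequence)
      (¬ ∃ s : ℕ → ℕ, ∀ K ⊆ ball (0 : ℂ) 1, IsCompact K →
          ∀ L : Set (Fin n → ℂ), IsCompact L →
            ∀ᶠ j in atTop, ∀ x ∈ K, f (s j) x ∉ L) ∧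
      -- but no rescaled sequence converges to a non-constant E-Brody curve
      ¬ ∃ (p : ℕ → ℂ) (p₀ : ℂ) (idx : ℕ → ℕ) (ρ : ℕ → ℝ) (g : ℂ → (Fin n → ℂ)),
          (∀ j, p j ∈ ball (0 : ℂ) 1) ∧ p₀ ∈ ball (0 : ℂ) 1 ∧
          Tendsto p atTop (𝓝 p₀) ∧
          (∀ j, 0 < ρ j) ∧ Tendsto ρ atTop (𝓝 0) ∧
          Differentiable ℂ g ∧
          (¬ ∃ c, ∀ ξ : ℂ, g ξ = c) ∧
          (∃ C : ℝ, ∀ ξ : ℂ, E (g ξ) (deriv g ξ) ≤ C) ∧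
          (∀ K : Set ℂ, IsCompact K →
            TendstoUniformlyOn (fun j ξ => f (idx j) (p j + (ρ j : ℂ) * ξ)) g atTop K) := by
  set i₀ : Fin n := ⟨0, by omega⟩
  set i₁ : Fin n := ⟨1, by omega⟩
  have h01 : i₀ ≠ i₁ := by simp [i₀, i₁, Fin.ext_iff]
  obtain ⟨φ, hφ, hφ0, hφE⟩ := exists_natCast_le_graphMap_deriv i₀ i₁ (E := E)
    (fun z => hEcont.comp (Continuous.prodMk_right z))
    (fun z v hv => (hEnonneg z v).lt_of_ne' (mt (hEzero z v).1 hv)) hEhom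
  set Γ := graphMap i₀ i₁ φ
  refine ⟨fun m z => Γ (m * z), fun m => ?_, ?_, ?_, ?_⟩
  · exact ((hφ.graphMap (i₀ := i₀) (i₁ := i₁)).comp
      (differentiable_id.const_mul (m : ℂ))).differentiableOn
  · intro hnormal
    obtain ⟨σ, g, hσ, -, hconv⟩ := hnormal id
    have hhalf : (1 / 2 : ℂ) ∈ ball (0 : ℂ) 1 := by norm_num
    have := ((continuous_apply i₀).tendsto _).comp
      ((hconv {1 / 2} (Set.singleton_subset_iff.2 hhalf) isCompact_singleton).tendsto_at rfl)
    simp only [id_eq, one_div, Function.comp_def, graphMap_apply_left h01, Γ] at this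
    exact not_tendsto_natCast_mul hσ (by norm_num) _ this
  · rintro ⟨s, hs⟩
    obtain ⟨j, hj⟩ := (hs {0} (by simp) isCompact_singleton {0} isCompact_singleton).exists
    exact hj 0 rfl (by simpa [Γ, graphMap] using hφ0 0)
  · rintro ⟨p, p₀, idx, ρ, g, -, -, -, -, -, -, hgnc, ⟨C, hC⟩, hconv⟩
    exact hgnc <| exists_const_of_tendsto_graphMap h01 hφ.continuous hEhom hφE
      (x := fun j => idx j * p j) (y := fun j => idx j * ρ j)
      (fun ξ => by
        simpa [mul_add, mul_assoc] using (hconv {ξ} isCompact_singleton).tendsto_at rfl) hC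
end

section
/- For every n ≥ 2, the space ℂⁿ is not of E_FS-limit type, where E_FS is the Fubini–Study length function on ℂⁿ: there exists a sequence of holomorphic maps F = {f_m} from the unit disc Δ to ℂⁿ that is not normal and not compactly divergent, and for which there do NOT exist sequences p_j ∈ Δ with p_j → p₀ ∈ Δ, maps f_j ∈ F, and ρ_j > 0 with ρ_j → 0⁺ such that g_j(ξ) := f_j(p_j + ρ_j ξ) converges uniformly on every compact subset of ℂ to a non-constant holomorphic curve g : ℂ → ℂⁿ with sup_{ξ∈ℂ} E_FS(g(ξ), g'(ξ)) < ∞. -/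
open Filter Topology Metric

/-- The Fubini–Study length function on `ℂⁿ` (pullback of the Fubini–Study metric on
`ℙⁿ(ℂ)` under the standard affine chart):
`E_FS(z,v) = sqrt(((1+‖z‖²)‖v‖² − |⟨v,z⟩|²)/(1+‖z‖²)²)`. -/
noncomputable def fubiniStudyLength {n : ℕ} (z v : EuclideanSpace ℂ (Fin n)) : ℝ :=
  Real.sqrt (((1 + ‖z‖ ^ 2) * ‖v‖ ^ 2 - ‖(inner ℂ v z : ℂ)‖ ^ 2) / (1 + ‖z‖ ^ 2) ^ 2)

/-!
The family is `f m z = φ (m z)` with `φ w = (w, exp w², 0, …, 0)`. It is not normal because the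
first coordinate of `f m (1/2)` escapes to infinity, and not compactly divergent because
`f m 0 = φ 0` for every `m`. The first coordinate of a rescaling `f (idx j) (p j + ρ j ξ)` is
affine in `ξ`, so a pointwise limit has the form `ξ ↦ φ (A + B ξ)`; it is constant if `B = 0`.
Otherwise its Fubini–Study derivative is unbounded: by Lagrange's identity the length of the
tangent vector `(a', b')` at `(a, b)` is at least `|a b' - b a'| / (1 + |a|² + |b|²)`, and for `φ`
at a point with `w² = r + i e^{2r}` this is at least `e^r / 3`.
-/

section

open Complex ComplexConjugate

section OrthonormalPair
variable {E ι : Type*} [NormedAddCommGroup E] [InnerProductSpace ℂ E] {e : ι → E} {i j : ι}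

theorem Orthonormal.inner_smul_add_smul (he : Orthonormal ℂ e) (hij : i ≠ j) (a b c d : ℂ) :
    inner ℂ (a • e i + b • e j) (c • e i + d • e j) = conj a * c + conj b * d := by
  classical
  have h := orthonormal_iff_ite.mp he
  simp [h, hij, hij.symm, he.1 i, he.1 j, mul_comm]

theorem Orthonormal.norm_smul_add_smul_sq (he : Orthonormal ℂ e) (hij : i ≠ j) (a b : ℂ) :
    ‖a • e i + b • e j‖ ^ 2 = ‖a‖ ^ 2 + ‖b‖ ^ 2 := by
  rw [norm_add_sq (𝕜 := ℂ), inner_smul_left, inner_smul_right, he.2 hij, norm_smul, norm_smul,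
    he.1 i, he.1 j]
  simp

end OrthonormalPair

theorem fubiniStudyLength_smul_right {n : ℕ} (z v : EuclideanSpace ℂ (Fin n)) (c : ℂ) :
    fubiniStudyLength z (c • v) = ‖c‖ * fubiniStudyLength z v := by
  rw [fubiniStudyLength, fubiniStudyLength, inner_smul_left, norm_mul, norm_smul, RCLike.norm_conj,
    ← Real.sqrt_sq (norm_nonneg c), ← Real.sqrt_mul (sq_nonneg _), Real.sqrt_sq (norm_nonneg c)]
  congr 1
  ring

theorem sq_norm_conj_mul_add_conj_mul_add_sq_norm_mul_sub_mul (a b c d : ℂ) :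
    ‖conj c * a + conj d * b‖ ^ 2 + ‖a * d - b * c‖ ^ 2
      = (‖a‖ ^ 2 + ‖b‖ ^ 2) * (‖c‖ ^ 2 + ‖d‖ ^ 2) := by
  simp only [Complex.sq_norm, normSq_apply, add_re, add_im, sub_re, sub_im, mul_re, mul_im,
    conj_re, conj_im]
  ring

theorem div_le_fubiniStudyLength_smul_add_smul {n : ℕ} {ι : Type*}
    {e : ι → EuclideanSpace ℂ (Fin n)} (he : Orthonormal ℂ e) {i j : ι} (hij : i ≠ j)
    (a b a' b' : ℂ) :
    ‖a * b' - b * a'‖ / (1 + ‖a‖ ^ 2 + ‖b‖ ^ 2)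
      ≤ fubiniStudyLength (a • e i + b • e j) (a' • e i + b' • e j) := by
  rw [fubiniStudyLength, he.inner_smul_add_smul hij, he.norm_smul_add_smul_sq hij,
    he.norm_smul_add_smul_sq hij, ← add_assoc]
  refine Real.le_sqrt_of_sq_le ?_
  rw [div_pow, div_le_div_iff_of_pos_right (by positivity)]
  nlinarith [sq_norm_conj_mul_add_conj_mul_add_sq_norm_mul_sub_mul a b a' b', sq_nonneg ‖a'‖,
    sq_nonneg ‖b'‖]

theorem tendsto_coeffs_of_forall_tendsto_add_mul {R ι : Type*} [Ring R] [TopologicalSpace R]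
    [IsTopologicalRing R] {l : Filter ι} {a b : ι → R} {c : R → R}
    (h : ∀ ξ, Tendsto (fun k => a k + b k * ξ) l (𝓝 (c ξ))) :
    Tendsto a l (𝓝 (c 0)) ∧ Tendsto b l (𝓝 (c 1 - c 0)) := by
  have ha : Tendsto a l (𝓝 (c 0)) := by simpa using h 0
  exact ⟨ha, by simpa using (h 1).sub ha⟩

section ExpSquareCurve
variable {n : ℕ} (i j : Fin n)

noncomputable def expSqCurve (w : ℂ) : EuclideanSpace ℂ (Fin n) :=
  w • EuclideanSpace.single i 1 + exp (w ^ 2) • EuclideanSpace.single j 1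

theorem hasDerivAt_expSqCurve (w : ℂ) :
    HasDerivAt (expSqCurve i j)
      ((1 : ℂ) • EuclideanSpace.single i 1 + (2 * w * exp (w ^ 2)) • EuclideanSpace.single j 1)
      w := by
  refine (((hasDerivAt_id w).smul_const _).add
    (((hasDerivAt_pow 2 w).cexp).smul_const _)).congr_deriv ?_
  push_cast
  ring_nf

theorem differentiable_expSqCurve : Differentiable ℂ (expSqCurve i j) :=
  fun w => (hasDerivAt_expSqCurve i j w).differentiableAt

variable {i j}

theorem expSqCurve_apply_left (hij : i ≠ j) (w : ℂ) : expSqCurve i j w i = w := by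
  simp [expSqCurve, hij]

theorem expSqCurve_zero : expSqCurve i j 0 = EuclideanSpace.single j 1 := by
  simp [expSqCurve]

theorem norm_exp_sq_div_three_le_fubiniStudyLength_expSqCurve (hij : i ≠ j) {w : ℂ}
    (hw₁ : 1 ≤ ‖w‖ ^ 2) (hw : ‖exp (w ^ 2)‖ ^ 2 ≤ ‖w‖ ^ 2) :
    ‖exp (w ^ 2)‖ / 3 ≤ fubiniStudyLength (expSqCurve i j w) (deriv (expSqCurve i j) w) := by
  rw [(hasDerivAt_expSqCurve i j w).deriv]
  refine le_trans ?_
    (div_le_fubiniStudyLength_smul_add_smul EuclideanSpace.orthonormal_single hij _ _ _ _)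
  have hW : 2 * ‖w‖ ^ 2 - 1 ≤ ‖2 * w ^ 2 - 1‖ := by
    have h := norm_sub_norm_le (2 * w ^ 2 : ℂ) 1
    rw [norm_mul, norm_pow, norm_one, Complex.norm_two] at h
    linarith
  rw [show w * (2 * w * exp (w ^ 2)) - exp (w ^ 2) * 1 = (2 * w ^ 2 - 1) * exp (w ^ 2) by ring,
    norm_mul, le_div_iff₀ (by positivity)]
  nlinarith [norm_nonneg (exp (w ^ 2))]

theorem exists_lt_fubiniStudyLength_expSqCurve (hij : i ≠ j) (C : ℝ) :
    ∃ w, C < fubiniStudyLength (expSqCurve i j w) (deriv (expSqCurve i j) w) := by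
  set r := max 0 (3 * C)
  obtain ⟨w, hw⟩ := IsAlgClosed.exists_pow_nat_eq ((r : ℂ) + Real.exp (2 * r) * I) two_pos
  have hexp : ‖exp (w ^ 2)‖ = Real.exp r := by simp [norm_exp, hw, -ofReal_exp]
  have hw₂ : Real.exp r ^ 2 ≤ ‖w‖ ^ 2 := by
    rw [← Real.exp_nat_mul, ← norm_pow, hw]
    refine le_trans (le_of_eq ?_) (abs_im_le_norm _)
    simp [-ofReal_exp, abs_of_pos (Real.exp_pos _)]
  have hw₁ : 1 ≤ ‖w‖ ^ 2 :=
    le_trans (one_le_pow₀ (Real.one_le_exp (le_max_left _ _))) hw₂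
  refine ⟨w, lt_of_lt_of_le ?_
    (norm_exp_sq_div_three_le_fubiniStudyLength_expSqCurve hij hw₁ (hexp ▸ hw₂))⟩
  rw [hexp, lt_div_iff₀ three_pos]
  linarith [Real.add_one_le_exp r, le_max_right 0 (3 * C)]

theorem exists_lt_fubiniStudyLength_expSqCurve_affine (hij : i ≠ j) (A : ℂ) {B : ℂ}
    (hB : B ≠ 0) (C : ℝ) :
    ∃ ξ, C < fubiniStudyLength (expSqCurve i j (A + B * ξ))
      (deriv (fun ξ => expSqCurve i j (A + B * ξ)) ξ) := by
  obtain ⟨w, hw⟩ := exists_lt_fubiniStudyLength_expSqCurve hij (C / ‖B‖)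
  have hξ : A + B * ((w - A) / B) = w := by field_simp; ring
  refine ⟨(w - A) / B, ?_⟩
  have hu : HasDerivAt (fun ξ => A + B * ξ) B ((w - A) / B) := by
    simpa using ((hasDerivAt_id _).const_mul B).const_add A
  have hd : HasDerivAt (fun ξ => expSqCurve i j (A + B * ξ)) (B • deriv (expSqCurve i j) w)
      ((w - A) / B) :=
    (differentiable_expSqCurve i j w).hasDerivAt.scomp_of_eq _ hu hξ.symm
  rw [hd.deriv, fubiniStudyLength_smul_right, hξ, ← div_lt_iff₀' (norm_pos_iff.mpr hB)]
  exact hw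

theorem tendsto_expSqCurve_apply_left (hij : i ≠ j) {ι : Type*} {l : Filter ι} {u : ι → ℂ}
    {v : EuclideanSpace ℂ (Fin n)} (h : Tendsto (fun k => expSqCurve i j (u k)) l (𝓝 v)) :
    Tendsto u l (𝓝 (v i)) := by
  simpa [Function.comp_def, expSqCurve_apply_left hij] using
    ((EuclideanSpace.proj (𝕜 := ℂ) i).continuous.tendsto v).comp h

theorem not_tendsto_expSqCurve_mul (hij : i ≠ j) {σ : ℕ → ℕ} (hσ : StrictMono σ) {z : ℂ}
    (hz : z ≠ 0) (v : EuclideanSpace ℂ (Fin n)) :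
    ¬ Tendsto (fun k => expSqCurve i j (σ k * z)) atTop (𝓝 v) := by
  intro h
  refine not_tendsto_atTop_of_tendsto_nhds (tendsto_expSqCurve_apply_left hij h).norm ?_
  simp_rw [norm_mul, norm_natCast]
  exact (tendsto_natCast_atTop_atTop.comp hσ.tendsto_atTop).atTop_mul_const (norm_pos_iff.mpr hz)

theorem exists_eq_expSqCurve_affine_of_tendsto (hij : i ≠ j) {ι : Type*} {l : Filter ι}
    [l.NeBot] {a b : ι → ℂ} {g : ℂ → EuclideanSpace ℂ (Fin n)}
    (h : ∀ ξ, Tendsto (fun k => expSqCurve i j (a k + b k * ξ)) l (𝓝 (g ξ))) :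
    ∃ A B, g = fun ξ => expSqCurve i j (A + B * ξ) := by
  obtain ⟨ha, hb⟩ := tendsto_coeffs_of_forall_tendsto_add_mul
    fun ξ => tendsto_expSqCurve_apply_left hij (h ξ)
  exact ⟨_, _, funext fun ξ => tendsto_nhds_unique (h ξ) <|
    (differentiable_expSqCurve i j).continuous.continuousAt.tendsto.comp (ha.add (hb.mul_const ξ))⟩

end ExpSquareCurve

end

/-- **`ℂⁿ` (n ≥ 2) is not of `E_FS`-limit type.**
There is a family `{f m}` of holomorphic maps from the unit disc to `ℂⁿ` which is
not normal and not compactly divergent, but for which no rescaled sequence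
`ξ ↦ f (idx j) (p j + ρ j • ξ)` (with `p j → p₀` in the disc, `ρ j → 0⁺`)
converges uniformly on compact subsets of `ℂ` to a non-constant holomorphic curve
with bounded Fubini–Study derivative. -/
theorem stmt3 (n : ℕ) (hn : 2 ≤ n) :
    ∃ f : ℕ → ℂ → EuclideanSpace ℂ (Fin n),
      -- each member is holomorphic on the unit disc
      (∀ m, DifferentiableOn ℂ (f m) (ball (0 : ℂ) 1)) ∧
      -- the family is not normal
      (¬ ∀ s : ℕ → ℕ, ∃ (σ : ℕ → ℕ) (g : ℂ → EuclideanSpace ℂ (Fin n)), StrictMono σ ∧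
          DifferentiableOn ℂ g (ball (0 : ℂ) 1) ∧
          ∀ K ⊆ ball (0 : ℂ) 1, IsCompact K →
            TendstoUniformlyOn (fun j => f (s (σ j))) g atTop K) ∧
      -- the family is not compactly divergent
      (¬ ∃ s : ℕ → ℕ, ∀ K ⊆ ball (0 : ℂ) 1, IsCompact K →
          ∀ L : Set (EuclideanSpace ℂ (Fin n)), IsCompact L →
            ∀ᶠ j in atTop, ∀ x ∈ K, f (s j) x ∉ L) ∧
      -- but no rescaled sequence converges to a non-constant E_FS-Brody curve
      ¬ ∃ (p : ℕ → ℂ) (p₀ : ℂ) (idx : ℕ → ℕ) (ρ : ℕ → ℝ)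
          (g : ℂ → EuclideanSpace ℂ (Fin n)),
          (∀ j, p j ∈ ball (0 : ℂ) 1) ∧ p₀ ∈ ball (0 : ℂ) 1 ∧
          Tendsto p atTop (𝓝 p₀) ∧
          (∀ j, 0 < ρ j) ∧ Tendsto ρ atTop (𝓝 0) ∧
          Differentiable ℂ g ∧
          (¬ ∃ c, ∀ ξ : ℂ, g ξ = c) ∧
          (∃ C : ℝ, ∀ ξ : ℂ, fubiniStudyLength (g ξ) (deriv g ξ) ≤ C) ∧
          (∀ K : Set ℂ, IsCompact K →
            TendstoUniformlyOn (fun j ξ => f (idx j) (p j + (ρ j : ℂ) * ξ)) g atTop K) := by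
  obtain ⟨i, j, hij⟩ : ∃ i j : Fin n, i ≠ j := ⟨⟨0, by omega⟩, ⟨1, hn⟩, by simp⟩
  refine ⟨fun m z => expSqCurve i j (m * z), fun m => ?_, ?_, ?_, ?_⟩
  · exact ((differentiable_expSqCurve _ _).comp (differentiable_id.const_mul _)).differentiableOn
  · intro hnormal
    obtain ⟨σ, g, hσ, -, hconv⟩ := hnormal id
    have hhalf : {(1 / 2 : ℂ)} ⊆ ball 0 1 := by norm_num
    exact not_tendsto_expSqCurve_mul hij hσ (by norm_num) (g (1 / 2))
      ((hconv _ hhalf isCompact_singleton).tendsto_at rfl)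
  · rintro ⟨s, hdiv⟩
    obtain ⟨k, hk⟩ := (hdiv {0} (by simp) isCompact_singleton
      {EuclideanSpace.single j 1} isCompact_singleton).exists
    exact hk 0 rfl (by simp [expSqCurve_zero])
  · rintro ⟨p, -, idx, ρ, g, -, -, -, -, -, -, hnc, ⟨C, hC⟩, hconv⟩
    obtain ⟨A, B, rfl⟩ := exists_eq_expSqCurve_affine_of_tendsto hij
      (a := fun k => idx k * p k) (b := fun k => idx k * ρ k) fun ξ => by
        simpa only [mul_add, mul_assoc] using (hconv {ξ} isCompact_singleton).tendsto_at rfl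
    rcases eq_or_ne B 0 with rfl | hB
    · exact hnc ⟨expSqCurve i j A, fun ξ => by simp⟩
    · obtain ⟨ξ, hξ⟩ := exists_lt_fubiniStudyLength_expSqCurve_affine hij A hB C
      exact (hC ξ).not_gt hξ
end

section
/- The space (ℂ*)² = (ℂ∖{0})² is not of E_FS-limit type: there exists a sequence of holomorphic maps F = {g_k} from the unit disc Δ to (ℂ*)² that is not normal (as a family of maps into (ℂ*)²) and not compactly divergent, and for which there do NOT exist sequences p_j ∈ Δ with p_j → p₀ ∈ Δ, maps f_j ∈ F, and ρ_j > 0 with ρ_j → 0⁺ such that φ_j(ξ) := f_j(p_j + ρ_j ξ) converges uniformly on every compact subset of ℂ to a non-constant holomorphic curve φ : ℂ → (ℂ*)² with sup_{ξ∈ℂ} E_FS(φ(ξ), φ'(ξ)) < ∞. -/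
open Filter Topology Metric

/-- The Fubini–Study length function on `ℂ²` (pullback of the Fubini–Study metric on
`ℙ²(ℂ)` under the standard affine chart). -/
noncomputable def fubiniStudyLength2 (z v : EuclideanSpace ℂ (Fin 2)) : ℝ :=
  Real.sqrt (((1 + ‖z‖ ^ 2) * ‖v‖ ^ 2 - ‖(inner ℂ v z : ℂ)‖ ^ 2) / (1 + ‖z‖ ^ 2) ^ 2)

/-- The subset `(ℂ*)² ⊆ ℂ²`. -/
def cStarSq : Set (EuclideanSpace ℂ (Fin 2)) := {w | w 0 ≠ 0 ∧ w 1 ≠ 0}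

/-!
The witness is `f_m(z) = (exp (m z²), exp (-i m z²))`: it blows up at `z = 1/2` but
`f_m(0) = (1, 1)` for all `m`, so the family is neither normal nor compactly divergent.

If rescalings `f_{m_j}(p_j + ρ_j ξ)` converge to `φ` in `(ℂ*)²`, the moduli of the two
coordinates recover the real and imaginary parts of the exponents `m_j (p_j + ρ_j ξ)²`, which
therefore converge pointwise. A pointwise limit of squares of affine functions is a quadratic
with vanishing discriminant, so `φ = (exp Λ, exp (-i Λ))` with `Λ` constant or
`Λ(ξ) = a (ξ - ξ₀)²`, `a ≠ 0`. In the second case, along the ray on which `Λ` is real and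
negative, `‖φ‖` stays bounded while `‖φ'‖` grows linearly; since
`E_FS(z, v) ≥ ‖v‖ / (1 + ‖z‖²)` by Cauchy–Schwarz, the Fubini–Study derivative is unbounded.
-/

open Complex Set

theorem norm_div_le_fubiniStudyLength2 (z v : EuclideanSpace ℂ (Fin 2)) :
    ‖v‖ / (1 + ‖z‖ ^ 2) ≤ fubiniStudyLength2 z v := by
  have hcs : ‖(inner ℂ v z : ℂ)‖ ≤ ‖v‖ * ‖z‖ := norm_inner_le_norm v z
  refine Real.le_sqrt_of_sq_le ?_
  rw [div_pow]
  gcongr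
  nlinarith [norm_nonneg (inner ℂ v z : ℂ), mul_nonneg (norm_nonneg v) (norm_nonneg z)]

theorem exists_tendsto_of_tendsto_cexp {ι : Type*} {l : Filter ι} [l.NeBot] {z : ι → ℂ}
    {w w' : ℂ} (hw : w ≠ 0) (hw' : w' ≠ 0) (h : Tendsto (fun j => exp (z j)) l (𝓝 w))
    (h' : Tendsto (fun j => exp (-I * z j)) l (𝓝 w')) :
    ∃ ζ, Tendsto z l (𝓝 ζ) ∧ exp ζ = w ∧ exp (-I * ζ) = w' := by
  have hre : Tendsto (fun j => (z j).re) l (𝓝 (Real.log ‖w‖)) := by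
    simpa [norm_exp] using h.norm.log (norm_ne_zero_iff.mpr hw)
  have him : Tendsto (fun j => (z j).im) l (𝓝 (Real.log ‖w'‖)) := by
    simpa [norm_exp] using h'.norm.log (norm_ne_zero_iff.mpr hw')
  have hz : Tendsto z l (𝓝 (Real.log ‖w‖ + Real.log ‖w'‖ * I)) := by
    simpa only [Function.comp_def, re_add_im] using
      (continuous_ofReal.tendsto _ |>.comp hre).add
        ((continuous_ofReal.tendsto _ |>.comp him).mul_const I)
  refine ⟨_, hz, tendsto_nhds_unique ((continuous_exp.tendsto _).comp hz) h,
    tendsto_nhds_unique ?_ h'⟩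
  exact ((continuous_exp.comp (continuous_const.mul continuous_id)).tendsto _).comp hz

theorem exists_discrim_eq_zero_of_tendsto_mul_sq {ι : Type*} {l : Filter ι} [l.NeBot]
    {m p r : ι → ℂ} {Λ : ℂ → ℂ}
    (h : ∀ ξ, Tendsto (fun j => m j * (p j + r j * ξ) ^ 2) l (𝓝 (Λ ξ))) :
    ∃ a b c : ℂ, discrim a b c = 0 ∧ ∀ ξ, Λ ξ = a * (ξ * ξ) + b * ξ + c := by
  have ha : Tendsto (fun j => m j * r j ^ 2) l (𝓝 ((Λ 1 + Λ (-1)) / 2 - Λ 0)) := by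
    refine (((h 1).add (h (-1))).div_const 2 |>.sub (h 0)).congr fun j => ?_
    ring
  have hb : Tendsto (fun j => 2 * m j * p j * r j) l (𝓝 ((Λ 1 - Λ (-1)) / 2)) := by
    refine (((h 1).sub (h (-1))).div_const 2).congr fun j => ?_
    ring
  have hc : Tendsto (fun j => m j * p j ^ 2) l (𝓝 (Λ 0)) :=
    (h 0).congr fun j => by ring
  refine ⟨(Λ 1 + Λ (-1)) / 2 - Λ 0, (Λ 1 - Λ (-1)) / 2, Λ 0, ?_, fun ξ => ?_⟩
  · refine tendsto_nhds_unique ((hb.pow 2).sub ((ha.const_mul 4).mul hc)) ?_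
    exact tendsto_const_nhds.congr fun j => by ring
  · refine tendsto_nhds_unique (h ξ) ?_
    exact ((ha.mul_const (ξ * ξ)).add (hb.mul_const ξ)).add hc |>.congr fun j => by ring

theorem eq_const_or_eq_mul_sub_sq_of_discrim_eq_zero {K : Type*} [Field K] [NeZero (2 : K)]
    {q : K → K} {a b c : K} (hd : discrim a b c = 0) (hq : ∀ x, q x = a * (x * x) + b * x + c) :
    (∀ x, q x = q 0) ∨ a ≠ 0 ∧ ∃ x₀, ∀ x, q x = a * (x - x₀) ^ 2 := by
  rcases eq_or_ne a 0 with rfl | ha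
  · have hb : b = 0 := by simpa [discrim] using hd
    left
    intro x
    simp [hq, hb]
  · refine Or.inr ⟨ha, -b / (2 * a), fun x => ?_⟩
    rw [hq]
    rw [discrim] at hd
    field_simp
    linear_combination -hd

theorem norm_apply_div_three_le_fubiniStudyLength2 {z : EuclideanSpace ℂ (Fin 2)}
    (hz : ‖z‖ ^ 2 ≤ 2) (v : EuclideanSpace ℂ (Fin 2)) (i : Fin 2) :
    ‖v i‖ / 3 ≤ fubiniStudyLength2 z v :=
  calc ‖v i‖ / 3 ≤ ‖v‖ / (1 + ‖z‖ ^ 2) := by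
        gcongr
        · exact PiLp.norm_apply_le v i
        · linarith
    _ ≤ fubiniStudyLength2 z v := norm_div_le_fubiniStudyLength2 z v

theorem hasDerivAt_euclidean_apply {𝕜 ι : Type*} [RCLike 𝕜] [Fintype ι]
    {φ : 𝕜 → EuclideanSpace 𝕜 ι} {x : 𝕜} (hφ : DifferentiableAt 𝕜 φ x) (i : ι) :
    HasDerivAt (fun x => φ x i) (deriv φ x i) x :=
  (EuclideanSpace.proj (𝕜 := 𝕜) i).hasFDerivAt.comp_hasDerivAt x hφ.hasDerivAt

theorem not_bddAbove_fubiniStudyLength2 {φ : ℂ → EuclideanSpace ℂ (Fin 2)}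
    (hφ : Differentiable ℂ φ) {a ξ₀ : ℂ} (ha : a ≠ 0)
    (h0 : ∀ ξ, φ ξ 0 = exp (a * (ξ - ξ₀) ^ 2)) (h1 : ∀ ξ, φ ξ 1 = exp (-I * (a * (ξ - ξ₀) ^ 2))) :
    ¬ BddAbove (range fun ξ => fubiniStudyLength2 (φ ξ) (deriv φ ξ)) := by
  have hderiv (ξ : ℂ) :
      deriv φ ξ 1 = exp (-I * (a * (ξ - ξ₀) ^ 2)) * (-I * (a * (2 * (ξ - ξ₀)))) := by
    have hsq : HasDerivAt (fun ξ => (ξ - ξ₀) ^ 2) (2 * (ξ - ξ₀)) ξ := by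
      simpa using ((hasDerivAt_id ξ).sub_const ξ₀).fun_pow 2
    refine (hasDerivAt_euclidean_apply (hφ ξ) 1).unique ?_
    simpa only [h1] using ((hsq.const_mul a).const_mul (-I)).cexp
  -- along the ray `ξ₀ + s w`, where `a w² = -‖a‖`, the exponent `a (ξ - ξ₀)²` is real and negative
  obtain ⟨w, hw⟩ : ∃ w : ℂ, w ^ 2 = -(‖a‖ : ℂ) / a := IsAlgClosed.exists_pow_nat_eq _ two_pos
  have hw1 : ‖w‖ = 1 := by
    have : ‖w‖ ^ 2 = 1 := by
      rw [← norm_pow, hw, norm_div, norm_neg, norm_real, Real.norm_of_nonneg (norm_nonneg a),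
        div_self (norm_ne_zero_iff.mpr ha)]
    nlinarith [norm_nonneg w]
  have hbound (s : ℝ) (hs : 0 ≤ s) :
      2 * ‖a‖ * s / 3 ≤ fubiniStudyLength2 (φ (ξ₀ + s * w)) (deriv φ (ξ₀ + s * w)) := by
    set t : ℝ := ‖a‖ * s ^ 2
    have hexp : a * (ξ₀ + s * w - ξ₀) ^ 2 = -(t : ℂ) := by
      rw [add_sub_cancel_left, mul_pow, hw]
      field_simp
      simp only [t]
      push_cast
      ring
    have hI : -I * -(t : ℂ) = t * I := by ring
    have hnorm0 : ‖φ (ξ₀ + s * w) 0‖ ≤ 1 := by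
      rw [h0, hexp, ← ofReal_neg, norm_exp_ofReal, Real.exp_le_one_iff, Left.neg_nonpos_iff]
      positivity
    have hnorm1 : ‖φ (ξ₀ + s * w) 1‖ = 1 := by
      rw [h1, hexp, hI, norm_exp_ofReal_mul_I]
    have hnormφ : ‖φ (ξ₀ + s * w)‖ ^ 2 ≤ 2 := by
      rw [EuclideanSpace.norm_sq_eq, Fin.sum_univ_two, hnorm1]
      nlinarith [norm_nonneg (φ (ξ₀ + s * w) 0)]
    have hnormd : ‖deriv φ (ξ₀ + s * w) 1‖ = 2 * ‖a‖ * s := by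
      rw [hderiv, hexp, hI, norm_mul, norm_exp_ofReal_mul_I, add_sub_cancel_left]
      simp [hw1, abs_of_nonneg hs]
      ring
    simpa only [hnormd] using
      norm_apply_div_three_le_fubiniStudyLength2 hnormφ (deriv φ (ξ₀ + s * w)) 1
  rintro ⟨C, hC⟩
  have hapos : 0 < ‖a‖ := norm_pos_iff.mpr ha
  have hs : 0 ≤ 3 * (|C| + 1) / (2 * ‖a‖) := by positivity
  have := (hbound _ hs).trans (hC (mem_range_self _))
  rw [show 2 * ‖a‖ * (3 * (|C| + 1) / (2 * ‖a‖)) / 3 = |C| + 1 by field_simp] at this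
  linarith [le_abs_self C]

noncomputable def expSqMap (m : ℕ) (z : ℂ) : EuclideanSpace ℂ (Fin 2) :=
  !₂[exp (m * z ^ 2), exp (-I * (m * z ^ 2))]

theorem differentiable_expSqMap (m : ℕ) : Differentiable ℂ (expSqMap m) := by
  rw [differentiable_euclidean]
  intro i
  fin_cases i <;> simp [expSqMap] <;> fun_prop

theorem expSqMap_mem_cStarSq (m : ℕ) (z : ℂ) : expSqMap m z ∈ cStarSq :=
  ⟨exp_ne_zero _, exp_ne_zero _⟩

theorem expSqMap_zero (m : ℕ) : expSqMap m 0 = !₂[1, 1] := by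
  simp [expSqMap]

theorem tendsto_norm_expSqMap_atTop {z : ℂ} (hz : 0 < (z ^ 2).re) :
    Tendsto (fun m => ‖expSqMap m z‖) atTop atTop := by
  refine tendsto_atTop_mono (fun m => PiLp.norm_apply_le _ 0) ?_
  have : Tendsto (fun m : ℕ => Real.exp (m * (z ^ 2).re)) atTop atTop :=
    Real.tendsto_exp_atTop.comp (tendsto_natCast_atTop_atTop.atTop_mul_const hz)
  simpa [expSqMap, norm_exp] using this

/-- **`(ℂ*)²` is not of `E_FS`-limit type.**
There is a family `{f m}` of holomorphic maps from the unit disc to `(ℂ*)²` which is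
not normal (as a family of maps into `(ℂ*)²`) and not compactly divergent, but for which
no rescaled sequence `ξ ↦ f (idx j) (p j + ρ j • ξ)` converges uniformly on compact
subsets of `ℂ` to a non-constant holomorphic curve `ℂ → (ℂ*)²` with bounded
Fubini–Study derivative. -/
theorem stmt4 :
    ∃ f : ℕ → ℂ → EuclideanSpace ℂ (Fin 2),
      -- each member is holomorphic on the unit disc with values in (ℂ*)²
      (∀ m, DifferentiableOn ℂ (f m) (ball (0 : ℂ) 1)) ∧
      (∀ m, ∀ z ∈ ball (0 : ℂ) 1, f m z ∈ cStarSq) ∧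
      -- the family is not normal (as a family of maps into (ℂ*)²)
      (¬ ∀ s : ℕ → ℕ, ∃ (σ : ℕ → ℕ) (g : ℂ → EuclideanSpace ℂ (Fin 2)), StrictMono σ ∧
          DifferentiableOn ℂ g (ball (0 : ℂ) 1) ∧
          (∀ z ∈ ball (0 : ℂ) 1, g z ∈ cStarSq) ∧
          ∀ K ⊆ ball (0 : ℂ) 1, IsCompact K →
            TendstoUniformlyOn (fun j => f (s (σ j))) g atTop K) ∧
      -- the family is not compactly divergent
      (¬ ∃ s : ℕ → ℕ, ∀ K ⊆ ball (0 : ℂ) 1, IsCompact K →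
          ∀ L : Set (EuclideanSpace ℂ (Fin 2)), L ⊆ cStarSq → IsCompact L →
            ∀ᶠ j in atTop, ∀ x ∈ K, f (s j) x ∉ L) ∧
      -- but no rescaled sequence converges to a non-constant E_FS-Brody curve in (ℂ*)²
      ¬ ∃ (p : ℕ → ℂ) (p₀ : ℂ) (idx : ℕ → ℕ) (ρ : ℕ → ℝ)
          (φ : ℂ → EuclideanSpace ℂ (Fin 2)),
          (∀ j, p j ∈ ball (0 : ℂ) 1) ∧ p₀ ∈ ball (0 : ℂ) 1 ∧
          Tendsto p atTop (𝓝 p₀) ∧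
          (∀ j, 0 < ρ j) ∧ Tendsto ρ atTop (𝓝 0) ∧
          Differentiable ℂ φ ∧
          (∀ ξ : ℂ, φ ξ ∈ cStarSq) ∧
          (¬ ∃ c, ∀ ξ : ℂ, φ ξ = c) ∧
          (∃ C : ℝ, ∀ ξ : ℂ, fubiniStudyLength2 (φ ξ) (deriv φ ξ) ≤ C) ∧
          (∀ K : Set ℂ, IsCompact K →
            TendstoUniformlyOn (fun j ξ => f (idx j) (p j + (ρ j : ℂ) * ξ)) φ atTop K) := by
  refine ⟨expSqMap, fun m => (differentiable_expSqMap m).differentiableOn,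
    fun m z _ => expSqMap_mem_cStarSq m z, ?_, ?_, ?_⟩
  · intro h
    obtain ⟨σ, g, hσ, -, -, hg⟩ := h id
    have hconv := (hg {1 / 2} (by norm_num [mem_ball]) isCompact_singleton).tendsto_at rfl
    exact not_tendsto_atTop_of_tendsto_nhds hconv.norm
      ((tendsto_norm_expSqMap_atTop (by norm_num)).comp hσ.tendsto_atTop)
  · rintro ⟨s, hs⟩
    obtain ⟨j, hj⟩ := (hs {0} (by simp) isCompact_singleton {!₂[1, 1]} (by simp [cStarSq])
      isCompact_singleton).exists
    exact hj 0 rfl (expSqMap_zero _)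
  · rintro ⟨p, -, idx, ρ, φ, -, -, -, -, -, hφ, hφ_mem, hφ_nonconst, hφ_bdd, hconv⟩
    have hpt (ξ : ℂ) : Tendsto (fun j => expSqMap (idx j) (p j + ρ j * ξ)) atTop (𝓝 (φ ξ)) :=
      (hconv {ξ} isCompact_singleton).tendsto_at rfl
    choose Λ hΛ hΛ0 hΛ1 using fun ξ => exists_tendsto_of_tendsto_cexp (hφ_mem ξ).1 (hφ_mem ξ).2
      (((PiLp.continuous_apply 2 _ 0).tendsto _).comp (hpt ξ))
      (((PiLp.continuous_apply 2 _ 1).tendsto _).comp (hpt ξ))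
    obtain ⟨a, b, c, hdiscrim, hΛ_eq⟩ := exists_discrim_eq_zero_of_tendsto_mul_sq hΛ
    rcases eq_const_or_eq_mul_sub_sq_of_discrim_eq_zero hdiscrim hΛ_eq with hconst | ⟨ha, ξ₀, hsq⟩
    · refine hφ_nonconst ⟨φ 0, fun ξ => ?_⟩
      ext i
      fin_cases i
      · simp [← hΛ0, hconst ξ]
      · simp [← hΛ1, hconst ξ]
    · obtain ⟨C, hC⟩ := hφ_bdd
      exact not_bddAbove_fubiniStudyLength2 hφ ha (fun ξ => by rw [← hΛ0, hsq])
        (fun ξ => by rw [← hΛ1, hsq]) ⟨C, forall_mem_range.2 hC⟩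
end

section
/- Let Ω be a domain in ℂ, let n ≥ 1, let f_k : Ω → ℂⁿ be holomorphic maps, and let a_k ∈ Ω with a_k → a₀ ∈ Ω and ‖f_k'(a_k)‖ ≥ k³ for all k ≥ 1. Then there exist points z_k ∈ Ω with z_k → a₀ such that, setting ρ_k := 1/‖f_k'(z_k)‖ and g_k(z) := f_k(z_k + ρ_k z), one has for all sufficiently large k: ρ_k·k ≤ 1/k², the map g_k is defined and holomorphic on the disc {|z| < k}, ‖g_k'(z)‖ ≤ 1 + 1/k for all |z| < k, and ‖g_k'(0)‖ = 1. -/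
/-!
Brody-type renormalisation. Put `r = 2/k` and maximise `(r - |w - a_k|) ‖f_k'(w)‖` over the
closed disc `|w - a_k| ≤ r`, at `z_k` say, with `σ = r - |z_k - a_k|` and `N = ‖f_k'(z_k)‖`.
Comparing with the value at `a_k` gives `σ N ≥ r k³ = 2k²`, so `ρ_k = 1/N ≤ σ/(2k²)`. Hence the
disc `|w| < k` is sent by `w ↦ z_k + ρ_k w` into `|p - z_k| ≤ σ/(2k)`, where the weight
`r - |p - a_k|` is still at least `σ (1 - 1/(2k))`; maximality then bounds `ρ_k ‖f_k'(p)‖` by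
`(1 - 1/(2k))⁻¹ ≤ 1 + 1/k`. Since `a_k → a₀` and `r → 0`, also `z_k → a₀`.
-/

open Filter Topology Metric

lemma Metric.eventually_closedBall_subset_of_tendsto {α ι : Type*} [PseudoMetricSpace α]
    {l : Filter ι} {a : ι → α} {a₀ : α} {r : ι → ℝ} {U : Set α} (hU : U ∈ 𝓝 a₀)
    (ha : Tendsto a l (𝓝 a₀)) (hr : Tendsto r l (𝓝 0)) :
    ∀ᶠ i in l, closedBall (a i) (r i) ⊆ U := by
  obtain ⟨ε, hε, hεU⟩ := Metric.mem_nhds_iff.mp hU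
  filter_upwards [Metric.tendsto_nhds.mp ha (ε / 2) (half_pos hε),
    hr.eventually (gt_mem_nhds (half_pos hε))] with i hai hri
  exact (closedBall_subset_ball' (by linarith)).trans hεU

lemma exists_isMaxOn_closedBall_sub_dist_mul {E : Type*} [PseudoMetricSpace E] [ProperSpace E]
    {u : E → ℝ} {c : E} {r : ℝ} (hr : 0 ≤ r) (hu : ContinuousOn u (closedBall c r)) :
    ∃ z ∈ closedBall c r, IsMaxOn (fun w => (r - dist w c) * u w) (closedBall c r) z :=
  (isCompact_closedBall c r).exists_isMaxOn ⟨c, mem_closedBall_self hr⟩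
    ((continuous_const.sub (continuous_id.dist continuous_const)).continuousOn.mul hu)

lemma IsMaxOn.sub_dist_mul_le {E : Type*} [PseudoMetricSpace E] {u : E → ℝ} {c z w : E}
    {r s : ℝ} (hz : IsMaxOn (fun w => (r - dist w c) * u w) (closedBall c r) z)
    (hwz : dist w z ≤ s) (hs : s ≤ r - dist z c) (hu : 0 ≤ u w) :
    w ∈ closedBall c r ∧ (r - dist z c - s) * u w ≤ (r - dist z c) * u z := by
  have htri := dist_triangle w z c
  have hw : w ∈ closedBall c r := mem_closedBall.mpr (by linarith)
  refine ⟨hw, le_trans ?_ (hz hw)⟩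
  exact mul_le_mul_of_nonneg_right (by linarith) hu

lemma le_one_add_one_div_of_mul_le {K x : ℝ} (hK : 1 ≤ K) (h : (1 - 1 / (2 * K)) * x ≤ 1) :
    x ≤ 1 + 1 / K := by
  have hK0 : 0 < K := by linarith
  have hc : 0 < 1 - 1 / (2 * K) := by
    rw [sub_pos, div_lt_one (by positivity)]; linarith
  have hprod : 1 ≤ (1 - 1 / (2 * K)) * (1 + 1 / K) := by
    have : (1 - 1 / (2 * K)) * (1 + 1 / K) = 1 + (K - 1) / (2 * K ^ 2) := by
      field_simp; ring
    rw [this, le_add_iff_nonneg_right]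
    exact div_nonneg (by linarith) (by positivity)
  exact le_of_mul_le_mul_left (h.trans hprod) hc

lemma deriv_comp_const_add_mul {𝕜 E : Type*} [NontriviallyNormedField 𝕜] [NormedAddCommGroup E]
    [NormedSpace 𝕜 E] (f : 𝕜 → E) (z c w : 𝕜) :
    deriv (fun w => f (z + c * w)) w = c • deriv f (z + c * w) := by
  rw [deriv_comp_mul_left c (fun y => f (z + y)), deriv_comp_const_add]

theorem exists_mem_closedBall_rescaling_bounds {E : Type*} [NormedAddCommGroup E] [NormedSpace ℝ E]
    [ProperSpace E] {u : E → ℝ} {a : E} {r K : ℝ} (hu : ContinuousOn u (closedBall a r))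
    (hu0 : ∀ w, 0 ≤ u w) (hK : 1 ≤ K) (hua : 2 * K ^ 2 ≤ r * u a) :
    ∃ z ∈ closedBall a r, 0 < u z ∧ 1 / u z * K ≤ r / (2 * K) ∧
      ∀ w ∈ ball (0 : E) K, z + (1 / u z) • w ∈ closedBall a r ∧
        1 / u z * u (z + (1 / u z) • w) ≤ 1 + 1 / K := by
  have hK0 : 0 < K := by linarith
  have hr : 0 ≤ r := by nlinarith [hu0 a]
  obtain ⟨z, hz, hmax⟩ := exists_isMaxOn_closedBall_sub_dist_mul hr hu
  set σ := r - dist z a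
  set N := u z
  have hσN : r * u a ≤ σ * N := by simpa using hmax (mem_closedBall_self hr)
  have hσr : σ ≤ r := sub_le_self r dist_nonneg
  have hN : 0 < N := by nlinarith [hu0 z]
  have hσ : 0 < σ := by nlinarith [hu0 z]
  have hρK : 1 / N * K ≤ σ / (2 * K) := by
    rw [one_div_mul_eq_div, div_le_div_iff₀ hN (by positivity)]
    nlinarith
  refine ⟨z, hz, hN, hρK.trans (by gcongr), fun w hw => ?_⟩
  have hdist : dist (z + (1 / N) • w) z ≤ σ / (2 * K) := by
    rw [dist_self_add_left, norm_smul, Real.norm_of_nonneg (by positivity)]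
    exact le_trans (by gcongr; exact (mem_ball_zero_iff.mp hw).le) hρK
  have hs : σ / (2 * K) ≤ σ := div_le_self hσ.le (by linarith)
  obtain ⟨hmem, hle⟩ := hmax.sub_dist_mul_le hdist hs (hu0 _)
  refine ⟨hmem, le_one_add_one_div_of_mul_le hK ?_⟩
  calc (1 - 1 / (2 * K)) * (1 / N * u (z + (1 / N) • w))
      = (σ - σ / (2 * K)) * u (z + (1 / N) • w) / (σ * N) := by field_simp
    _ ≤ 1 := div_le_one_of_le₀ hle (by positivity)

section Rescaling

variable {F : Type*} [NormedAddCommGroup F] [NormedSpace ℂ F]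

def IsRescalingCenter (f : ℂ → F) (Ω : Set ℂ) (K : ℝ) (z : ℂ) : Prop :=
  (1 / ‖deriv f z‖) * K ≤ 1 / K ^ 2 ∧
    (∀ w ∈ ball (0 : ℂ) K, z + ((1 / ‖deriv f z‖ : ℝ) : ℂ) * w ∈ Ω) ∧
    DifferentiableOn ℂ (fun w => f (z + ((1 / ‖deriv f z‖ : ℝ) : ℂ) * w)) (ball (0 : ℂ) K) ∧
    (∀ w ∈ ball (0 : ℂ) K,
      ‖deriv (fun w => f (z + ((1 / ‖deriv f z‖ : ℝ) : ℂ) * w)) w‖ ≤ 1 + 1 / K) ∧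
    ‖deriv (fun w => f (z + ((1 / ‖deriv f z‖ : ℝ) : ℂ) * w)) 0‖ = 1

theorem exists_mem_closedBall_isRescalingCenter [CompleteSpace F] {f : ℂ → F} {Ω : Set ℂ}
    (hΩ : IsOpen Ω) (hf : DifferentiableOn ℂ f Ω) {a : ℂ} {K : ℝ} (hK : 1 ≤ K)
    (hsub : closedBall a (2 / K) ⊆ Ω) (hder : K ^ 3 ≤ ‖deriv f a‖) :
    ∃ z ∈ closedBall a (2 / K), IsRescalingCenter f Ω K z := by
  have hK0 : 0 < K := by linarith
  have hcont : ContinuousOn (fun w => ‖deriv f w‖) (closedBall a (2 / K)) :=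
    ((hf.analyticOnNhd hΩ).deriv.continuousOn.norm).mono hsub
  have hua : 2 * K ^ 2 ≤ 2 / K * ‖deriv f a‖ := by
    rw [div_mul_eq_mul_div, le_div_iff₀ hK0]; nlinarith
  obtain ⟨z, hz, hN, hρK, hw⟩ := exists_mem_closedBall_rescaling_bounds hcont
    (fun _ => norm_nonneg _) hK hua
  simp only [Complex.real_smul] at hw
  have hmaps : ∀ w ∈ ball (0 : ℂ) K, z + ((1 / ‖deriv f z‖ : ℝ) : ℂ) * w ∈ Ω :=
    fun w hw' => hsub (hw w hw').1
  refine ⟨z, hz, ?_, hmaps, ?_, fun w hw' => ?_, ?_⟩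
  · convert hρK using 1
    field_simp
  · exact hf.comp (by fun_prop) hmaps
  · rw [deriv_comp_const_add_mul, norm_smul, Complex.norm_real,
      Real.norm_of_nonneg (by positivity)]
    exact (hw w hw').2
  · rw [deriv_comp_const_add_mul, norm_smul, Complex.norm_real,
      Real.norm_of_nonneg (by positivity), mul_zero, add_zero, one_div_mul_cancel hN.ne']

end Rescaling

theorem stmt6_general (n : ℕ)
    (Ω : Set ℂ) (hΩo : IsOpen Ω)
    (f : ℕ → ℂ → EuclideanSpace ℂ (Fin n))
    (hf : ∀ k, DifferentiableOn ℂ (f k) Ω)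
    (a : ℕ → ℂ) (a₀ : ℂ) (ha₀ : a₀ ∈ Ω)
    (halim : Tendsto a atTop (𝓝 a₀))
    (hder : ∀ k : ℕ, 1 ≤ k → (k : ℝ) ^ 3 ≤ ‖deriv (f k) (a k)‖) :
    ∃ z : ℕ → ℂ, (∀ k, z k ∈ Ω) ∧ Tendsto z atTop (𝓝 a₀) ∧
      ∀ᶠ k in atTop,
        (1 / ‖deriv (f k) (z k)‖) * k ≤ 1 / (k : ℝ) ^ 2 ∧
        (∀ w ∈ ball (0 : ℂ) (k : ℝ),
          z k + ((1 / ‖deriv (f k) (z k)‖ : ℝ) : ℂ) * w ∈ Ω) ∧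
        DifferentiableOn ℂ
          (fun w => f k (z k + ((1 / ‖deriv (f k) (z k)‖ : ℝ) : ℂ) * w))
          (ball (0 : ℂ) (k : ℝ)) ∧
        (∀ w ∈ ball (0 : ℂ) (k : ℝ),
          ‖deriv (fun w => f k (z k + ((1 / ‖deriv (f k) (z k)‖ : ℝ) : ℂ) * w)) w‖
            ≤ 1 + 1 / (k : ℝ)) ∧
        ‖deriv (fun w => f k (z k + ((1 / ‖deriv (f k) (z k)‖ : ℝ) : ℂ) * w)) 0‖ = 1 := by
  have hrad : Tendsto (fun k : ℕ => 2 / (k : ℝ)) atTop (𝓝 0) :=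
    tendsto_const_div_atTop_nhds_zero_nat 2
  have hgood : ∀ᶠ k : ℕ in atTop, 1 ≤ k ∧ closedBall (a k) (2 / k) ⊆ Ω :=
    (eventually_ge_atTop 1).and
      (eventually_closedBall_subset_of_tendsto (hΩo.mem_nhds ha₀) halim hrad)
  have hcenter : ∀ k : ℕ, ∃ z ∈ Ω, 1 ≤ k ∧ closedBall (a k) (2 / k) ⊆ Ω →
      dist (a k) z ≤ 2 / k ∧ IsRescalingCenter (f k) Ω k z := by
    intro k
    by_cases hk : 1 ≤ k ∧ closedBall (a k) (2 / k) ⊆ Ω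
    · obtain ⟨z, hz, hcen⟩ := exists_mem_closedBall_isRescalingCenter hΩo (hf k)
        (by exact_mod_cast hk.1) hk.2 (hder k hk.1)
      exact ⟨z, hk.2 hz, fun _ => ⟨dist_comm z (a k) ▸ hz, hcen⟩⟩
    · exact ⟨a₀, ha₀, fun h => absurd h hk⟩
  choose z hzΩ hz using hcenter
  refine ⟨z, hzΩ, halim.congr_dist ?_, hgood.mono fun k hk => (hz k hk).2⟩
  exact squeeze_zero' (.of_forall fun _ => dist_nonneg)
    (hgood.mono fun k hk => (hz k hk).1) hrad

/-- **Rescaling step in the proof of the Marty-type criterion.**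
Let `Ω ⊆ ℂ` be a domain, `f k : Ω → ℂⁿ` holomorphic, `a k ∈ Ω` with `a k → a₀ ∈ Ω` and
`‖f k ' (a k)‖ ≥ k³`. Then there are `z k ∈ Ω` with `z k → a₀` such that, setting
`ρ k = 1/‖f k ' (z k)‖` and `g k (w) = f k (z k + ρ k w)`, for all large `k`:
`ρ k · k ≤ 1/k²`, `g k` is defined and holomorphic on `{|w| < k}`,
`‖g k ' (w)‖ ≤ 1 + 1/k` there, and `‖g k ' (0)‖ = 1`. -/
theorem stmt6 (n : ℕ) (hn : 1 ≤ n)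
    (Ω : Set ℂ) (hΩo : IsOpen Ω) (hΩc : IsConnected Ω)
    (f : ℕ → ℂ → EuclideanSpace ℂ (Fin n))
    (hf : ∀ k, DifferentiableOn ℂ (f k) Ω)
    (a : ℕ → ℂ) (a₀ : ℂ) (ha : ∀ k, a k ∈ Ω) (ha₀ : a₀ ∈ Ω)
    (halim : Tendsto a atTop (𝓝 a₀))
    (hder : ∀ k : ℕ, 1 ≤ k → (k : ℝ) ^ 3 ≤ ‖deriv (f k) (a k)‖) :
    ∃ z : ℕ → ℂ, (∀ k, z k ∈ Ω) ∧ Tendsto z atTop (𝓝 a₀) ∧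
      ∀ᶠ k in atTop,
        (1 / ‖deriv (f k) (z k)‖) * k ≤ 1 / (k : ℝ) ^ 2 ∧
        (∀ w ∈ ball (0 : ℂ) (k : ℝ),
          z k + ((1 / ‖deriv (f k) (z k)‖ : ℝ) : ℂ) * w ∈ Ω) ∧
        DifferentiableOn ℂ
          (fun w => f k (z k + ((1 / ‖deriv (f k) (z k)‖ : ℝ) : ℂ) * w))
          (ball (0 : ℂ) (k : ℝ)) ∧
        (∀ w ∈ ball (0 : ℂ) (k : ℝ),
          ‖deriv (fun w => f k (z k + ((1 / ‖deriv (f k) (z k)‖ : ℝ) : ℂ) * w)) w‖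
            ≤ 1 + 1 / (k : ℝ)) ∧
        ‖deriv (fun w => f k (z k + ((1 / ‖deriv (f k) (z k)‖ : ℝ) : ℂ) * w)) 0‖ = 1 :=
  stmt6_general n Ω hΩo f hf a a₀ ha₀ halim hder
end

section
/- Let Z be a nonempty connected open subset of ℂ^m, let h : ℂ^N → ℂ be a holomorphic function, and let S = {w ∈ ℂ^N : h(w) = 0}. Suppose φ_n : Z → ℂ^N are holomorphic maps with φ_n(Z) ∩ S = ∅ for every n, and that {φ_n} converges uniformly on every compact subset of Z to a holomorphic map φ : Z → ℂ^N. Then either φ(Z) ⊆ ℂ^N ∖ S or φ(Z) ⊆ S. -/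
open Filter Topology Metric Set

/-- Core Hurwitz step: if `h ∘ φ` vanishes at `z₀ ∈ Z`, it vanishes on
`ball z₀ (R/2)` whenever `ball z₀ R ⊆ Z`. -/
lemma hurwitz_core (m N : ℕ)
    (Z : Set (Fin m → ℂ))
    (h : (Fin N → ℂ) → ℂ) (hh : Differentiable ℂ h)
    (φseq : ℕ → (Fin m → ℂ) → (Fin N → ℂ))
    (hφseq : ∀ n, DifferentiableOn ℂ (φseq n) Z)
    (havoid : ∀ n, ∀ z ∈ Z, h (φseq n z) ≠ 0)
    (φ : (Fin m → ℂ) → (Fin N → ℂ)) (hφ : DifferentiableOn ℂ φ Z)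
    (hconv : ∀ K ⊆ Z, IsCompact K → TendstoUniformlyOn φseq φ atTop K)
    (z₀ : Fin m → ℂ) (hz₀ : z₀ ∈ Z) (hf0 : h (φ z₀) = 0)
    (R : ℝ) (hR : 0 < R) (hRZ : ball z₀ R ⊆ Z)
    (z₁ : Fin m → ℂ) (hz₁ : z₁ ∈ ball z₀ (R / 2)) : h (φ z₁) = 0 := by
  by_contra hf1
  set v : Fin m → ℂ := z₁ - z₀ with hv
  set L : ℂ → (Fin m → ℂ) := fun w => z₀ + w • v with hL
  have hvnorm : ‖v‖ < R / 2 := by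
    have := mem_ball_iff_norm.1 hz₁
    simpa [hv] using this
  have hLmaps : ∀ w : ℂ, ‖w‖ < 2 → L w ∈ Z := by
    intro w hw
    apply hRZ
    rw [mem_ball_iff_norm]
    have h1 : ‖L w - z₀‖ = ‖w‖ * ‖v‖ := by simp [hL, norm_smul]
    rw [h1]
    calc ‖w‖ * ‖v‖ ≤ 2 * ‖v‖ := by
          apply mul_le_mul_of_nonneg_right hw.le (norm_nonneg _)
      _ < 2 * (R / 2) := by
          nlinarith [norm_nonneg v]
      _ = R := by ring
  have hLd : Differentiable ℂ L :=
    (differentiable_const _).add (differentiable_id.smul_const v)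
  set g : ℂ → ℂ := fun w => h (φ (L w)) with hg
  have hgd : DifferentiableOn ℂ g (ball (0:ℂ) 2) := by
    apply hh.comp_differentiableOn
    exact hφ.comp hLd.differentiableOn
      (fun w hw => hLmaps w (by simpa using mem_ball_iff_norm.1 hw))
  have hga : AnalyticOnNhd ℂ g (ball (0:ℂ) 2) := hgd.analyticOnNhd isOpen_ball
  have hg0 : g 0 = 0 := by simp [hg, hL, hf0]
  have hg1 : g 1 ≠ 0 := by
    have hL1 : L 1 = z₁ := by simp [hL, hv]
    simpa [hg, hL1] using hf1
  have h0mem : (0:ℂ) ∈ ball (0:ℂ) 2 := by norm_num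
  have hnotev : ¬ (g =ᶠ[𝓝 (0:ℂ)] 0) := by
    intro hev
    have := hga.eqOn_zero_of_preconnected_of_eventuallyEq_zero
      (convex_ball (0:ℂ) 2).isPreconnected h0mem hev
    exact hg1 (this (by rw [mem_ball_iff_norm]; norm_num))
  have hne : ∀ᶠ w in 𝓝[≠] (0:ℂ), g w ≠ 0 :=
    ((hga 0 h0mem).eventually_eq_zero_or_eventually_ne_zero).resolve_left hnotev
  rw [eventually_nhdsWithin_iff] at hne
  obtain ⟨δ, hδpos, hδ⟩ := Metric.eventually_nhds_iff.1 hne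
  set r : ℝ := min (δ / 2) (1 / 2) with hr
  have hrpos : 0 < r := by positivity
  have hrδ : r < δ := lt_of_le_of_lt (min_le_left _ _) (by linarith)
  have hr1 : r < 1 := lt_of_le_of_lt (min_le_right _ _) (by norm_num)
  have hsne : ∀ w ∈ sphere (0:ℂ) r, g w ≠ 0 := by
    intro w hw
    have hwr : ‖w‖ = r := by simpa using hw
    have hw0 : w ≠ 0 := by
      intro h0; rw [h0, norm_zero] at hwr; exact hrpos.ne hwr
    exact hδ (by rw [dist_zero_right, hwr]; exact hrδ) (by simpa using hw0)
  have hsub2 : sphere (0:ℂ) r ⊆ ball (0:ℂ) 2 := fun w hw => by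
    rw [mem_ball_iff_norm]
    have : ‖w‖ = r := by simpa using hw
    simp only [sub_zero]; rw [this]; linarith
  obtain ⟨w₀, hw₀s, hw₀min⟩ := (isCompact_sphere (0:ℂ) r).exists_isMinOn
    (NormedSpace.sphere_nonempty.2 hrpos.le)
    ((hgd.continuousOn.mono hsub2).norm)
  set ε : ℝ := ‖g w₀‖ with hε
  have hεpos : 0 < ε := norm_pos_iff.2 (hsne w₀ hw₀s)
  set K : Set (Fin m → ℂ) := L '' closedBall 0 r with hK
  have hKc : IsCompact K := (isCompact_closedBall (0:ℂ) r).image hLd.continuous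
  have hKZ : K ⊆ Z := by
    rintro _ ⟨w, hw, rfl⟩
    exact hLmaps w (lt_of_le_of_lt (mem_closedBall_zero_iff.1 hw) (by linarith))
  have hφK : IsCompact (φ '' K) := hKc.image_of_continuousOn (hφ.continuousOn.mono hKZ)
  set T : Set (Fin N → ℂ) := cthickening 1 (φ '' K) with hT
  have hTc : IsCompact T := hφK.cthickening
  have hTu : UniformContinuousOn h T :=
    hTc.uniformContinuousOn_of_continuous hh.continuous.continuousOn
  obtain ⟨δ', hδ'pos, hδ'⟩ := Metric.uniformContinuousOn_iff.1 hTu (ε / 2) (by positivity)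
  obtain ⟨n, hn⟩ :=
    (Metric.tendstoUniformlyOn_iff.1 (hconv K hKZ hKc) (min δ' 1) (lt_min hδ'pos one_pos)).exists
  have hclose : ∀ z ∈ K, dist (h (φseq n z)) (h (φ z)) < ε / 2 := by
    intro z hz
    have h1 := hn z hz
    have hφzT : φ z ∈ T := self_subset_cthickening _ ⟨z, hz, rfl⟩
    have hφnT : φseq n z ∈ T := by
      apply mem_cthickening_of_dist_le (φseq n z) (φ z) 1 (φ '' K) ⟨z, hz, rfl⟩
      rw [dist_comm]
      exact (lt_of_lt_of_le h1 (min_le_right _ _)).le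
    exact hδ' _ hφnT _ hφzT (by rw [dist_comm]; exact lt_of_lt_of_le h1 (min_le_left _ _))
  have hLmaps' : ∀ w ∈ closedBall (0:ℂ) r, L w ∈ Z := fun w hw =>
    hLmaps w (lt_of_le_of_lt (mem_closedBall_zero_iff.1 hw) (by linarith))
  set F : ℂ → ℂ := fun w => (h (φseq n (L w)))⁻¹ with hF
  have hFc : DiffContOnCl ℂ F (ball (0:ℂ) r) := by
    apply DifferentiableOn.diffContOnCl
    rw [closure_ball _ hrpos.ne']
    apply DifferentiableOn.inv
    · exact hh.comp_differentiableOn ((hφseq n).comp hLd.differentiableOn hLmaps')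
    · intro w hw; exact havoid n _ (hLmaps' w hw)
  have hfront : ∀ w ∈ frontier (ball (0:ℂ) r), ‖F w‖ ≤ (ε / 2)⁻¹ := by
    intro w hw
    rw [frontier_ball _ hrpos.ne'] at hw
    have hKw : L w ∈ K := ⟨w, sphere_subset_closedBall hw, rfl⟩
    have hd := hclose (L w) hKw
    have hglow : ε ≤ ‖g w‖ := hw₀min hw
    have hxpos' : 0 < ‖h (φseq n (L w))‖ :=
      norm_pos_iff.2 (havoid n _ (hLmaps' w (sphere_subset_closedBall hw)))
    have hlow : ε / 2 ≤ ‖h (φseq n (L w))‖ := by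
      have h2 : ‖g w‖ - ‖h (φseq n (L w))‖ ≤ dist (g w) (h (φseq n (L w))) := by
        rw [dist_eq_norm]; exact norm_sub_norm_le _ _
      rw [dist_comm] at h2
      have : dist (h (φseq n (L w))) (g w) < ε / 2 := hd
      linarith
    rw [hF]
    simp only [norm_inv]
    exact (inv_le_inv₀ hxpos' (by positivity)).2 hlow
  have hmax : ‖F 0‖ ≤ (ε / 2)⁻¹ :=
    Complex.norm_le_of_forall_mem_frontier_norm_le isBounded_ball hFc hfront
      (subset_closure (mem_ball_self hrpos))
  have hL0 : L 0 = z₀ := by simp [hL]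
  have hne0 : h (φseq n z₀) ≠ 0 := havoid n z₀ hz₀
  have hxpos : 0 < ‖h (φseq n z₀)‖ := norm_pos_iff.2 hne0
  have hF0 : ‖F 0‖ = ‖h (φseq n z₀)‖⁻¹ := by rw [hF]; simp [hL0]
  have hgel : ε / 2 ≤ ‖h (φseq n z₀)‖ := by
    rw [hF0] at hmax
    rwa [inv_le_inv₀ hxpos (by positivity)] at hmax
  have hz₀K : z₀ ∈ K := ⟨0, mem_closedBall_self hrpos.le, hL0⟩
  have := hclose z₀ hz₀K
  rw [hf0, dist_zero_right] at this
  linarith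

/-- **Hurwitz-type dichotomy.** Let `Z ⊆ ℂ^m` be a domain, `h : ℂ^N → ℂ` holomorphic and
`S = {h = 0}`. If holomorphic maps `φ n : Z → ℂ^N` avoid `S` and converge uniformly on
every compact subset of `Z` to a holomorphic map `φ`, then either `φ(Z)` avoids `S` or
`φ(Z) ⊆ S`. -/
theorem stmt14 (m N : ℕ)
    (Z : Set (Fin m → ℂ)) (hZo : IsOpen Z) (hZc : IsConnected Z)
    (h : (Fin N → ℂ) → ℂ) (hh : Differentiable ℂ h)
    (φseq : ℕ → (Fin m → ℂ) → (Fin N → ℂ))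
    (hφseq : ∀ n, DifferentiableOn ℂ (φseq n) Z)
    (havoid : ∀ n, ∀ z ∈ Z, h (φseq n z) ≠ 0)
    (φ : (Fin m → ℂ) → (Fin N → ℂ)) (hφ : DifferentiableOn ℂ φ Z)
    (hconv : ∀ K ⊆ Z, IsCompact K → TendstoUniformlyOn φseq φ atTop K) :
    (∀ z ∈ Z, h (φ z) ≠ 0) ∨ (∀ z ∈ Z, h (φ z) = 0) := by
  by_cases hex : ∃ z₀ ∈ Z, h (φ z₀) = 0
  · right
    obtain ⟨z₀, hz₀, hf0⟩ := hex
    set u : Set (Fin m → ℂ) := {z | z ∈ Z ∧ h (φ z) = 0} with hu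
    have hop : IsOpen u := by
      rw [Metric.isOpen_iff]
      intro z hz
      obtain ⟨R, hRpos, hRZ⟩ := Metric.isOpen_iff.1 hZo z hz.1
      refine ⟨R / 2, by positivity, fun w hw => ?_⟩
      exact ⟨hRZ (ball_subset_ball (by linarith) hw),
        hurwitz_core m N Z h hh φseq hφseq havoid φ hφ hconv z hz.1 hz.2 R hRpos hRZ w hw⟩
    have hclosed : closure u ∩ Z ⊆ u := by
      rintro z ⟨hzc, hzZ⟩
      refine ⟨hzZ, ?_⟩
      have hcont : ContinuousAt (fun z => h (φ z)) z :=
        hh.continuous.continuousAt.comp (hφ.differentiableAt (hZo.mem_nhds hzZ)).continuousAt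
      have hmem : (fun z => h (φ z)) z ∈ closure ((fun z => h (φ z)) '' u) :=
        mem_closure_image hcont hzc
      have hsub : (fun z => h (φ z)) '' u ⊆ {0} := by
        rintro _ ⟨w, hw, rfl⟩; exact hw.2
      have := (closure_mono hsub).trans (by rw [closure_singleton]) hmem
      simpa using this
    have hZu : Z ⊆ u :=
      hZc.isPreconnected.subset_of_closure_inter_subset hop ⟨z₀, hz₀, hz₀, hf0⟩ hclosed
    exact fun z hz => (hZu hz).2
  · left
    push_neg at hex
    exact hex
end

section
/- Let {k_j} be a sequence of positive integers with exp(i·k_j) → 1 as j → ∞ (hence k_j → ∞). Then the functions g_j(z) := exp(exp(iπ/2 + z/k_j + log k_j)) = exp(i·k_j·exp(z/k_j)) converge uniformly on every compact subset of ℂ to the function g(z) = exp(i z). -/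
/-!
With `E := dslope exp 0`, i.e. `E w = (exp w - 1) / w` and `E 0 = 1`, one has
`g j z = exp (i k_j) * exp (i z E (z / k_j))`. The map `((c, s), z) ↦ c * exp (i z E (s z))` is
jointly continuous, so on the compact set `K` it converges uniformly as `(c, s) → (1, 0)`, where
its value is `exp (i z)`. Finally `(exp (i k_j), 1 / k_j) → (1, 0)`: since `π` is irrational,
`exp (i m) ≠ 1` for every integer `m ≥ 1`, so `exp (i k_j) → 1` forces every value of `k_j` to be
taken only finitely often, i.e. `k_j → ∞`.
-/

open Filter Topology

theorem IsCompact.tendstoUniformlyOn_of_continuous_uncurry {α β ι E : Type*}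
    [TopologicalSpace α] [TopologicalSpace β] [UniformSpace E] {f : α → β → E} {K : Set β}
    (hK : IsCompact K) (hf : Continuous f.uncurry) {l : Filter ι} {p : ι → α} {q : α}
    (hp : Tendsto p l (𝓝 q)) : TendstoUniformlyOn (fun i => f (p i)) (f q) l K := by
  intro u hu
  obtain ⟨v, hv, hvu⟩ := hK.mem_uniformity_of_prod hf.continuousOn (Set.mem_univ q)
    (tendsto_swap_uniformity hu)
  rw [nhdsWithin_univ] at hv
  filter_upwards [hp hv] with i hi x hx
  exact hvu _ hi x hx

namespace Complex

theorem exp_I_mul_natCast_ne_one {n : ℕ} (hn : n ≠ 0) : exp (I * n) ≠ 1 := by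
  intro h
  have hcos : Real.cos n = 1 := by simpa [exp_re] using congrArg re h
  obtain ⟨m, hm⟩ := (Real.cos_eq_one_iff _).mp hcos
  have hm0 : 2 * m ≠ 0 := by
    rintro hm0
    obtain rfl : m = 0 := by omega
    exact hn (by simpa using hm.symm)
  refine (irrational_pi.intCast_mul hm0).ne_nat n ?_
  push_cast
  linarith

theorem exp_I_mul_pi_div_two_add_div_add_log {r : ℝ} (hr : 0 < r) (z : ℂ) :
    exp (I * Real.pi / 2 + z / r + (Real.log r : ℂ)) = I * r * exp (z / r) := by
  rw [show I * Real.pi / 2 = Real.pi / 2 * I by ring, exp_add, exp_add, exp_pi_div_two_mul_I,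
    ← ofReal_exp, Real.exp_log hr]
  ring

theorem exp_I_mul_mul_exp_div {k : ℂ} (hk : k ≠ 0) (z : ℂ) :
    exp (I * k * exp (z / k)) = exp (I * k) * exp (I * z * dslope exp 0 (k⁻¹ * z)) := by
  have hslope : k⁻¹ * z * dslope exp 0 (k⁻¹ * z) = exp (z / k) - 1 := by
    simpa [div_eq_inv_mul] using sub_smul_dslope exp 0 (k⁻¹ * z)
  rw [← exp_add]
  congr 1
  calc I * k * exp (z / k) = I * k + I * k * (exp (z / k) - 1) := by ring
    _ = _ := by rw [← hslope]; field_simp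

theorem continuous_dslope_exp : Continuous (dslope exp 0) :=
  continuousOn_univ.mp <| (continuousOn_dslope univ_mem).mpr
    ⟨continuous_exp.continuousOn, differentiable_exp 0⟩

end Complex

theorem tendsto_atTop_of_tendsto_exp_I_mul_nhds_one {ι : Type*} {l : Filter ι} {k : ι → ℕ}
    (hk : ∀ i, 0 < k i) (hlim : Tendsto (fun i => Complex.exp (Complex.I * k i)) l (𝓝 1)) :
    Tendsto k l atTop := by
  rw [← Nat.cofinite_eq_atTop, Tendsto, le_cofinite_iff_eventually_ne]
  intro m
  rw [eventually_map]
  rcases Nat.eq_zero_or_pos m with rfl | hm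
  · exact Eventually.of_forall fun i => (hk i).ne'
  · refine (hlim.eventually_ne (Complex.exp_I_mul_natCast_ne_one hm.ne').symm).mono ?_
    rintro i hi rfl
    exact hi rfl

/-- **An explicit sequence converging to the Brody curve `z ↦ exp (i z)` in `ℂ*`.**
If `k j` are positive integers with `exp (i k j) → 1`, then the entire nowhere-vanishing
functions `g j (z) = exp (exp (iπ/2 + z/k j + log (k j))) = exp (i k j exp (z / k j))`
converge uniformly on every compact subset of `ℂ` to `z ↦ exp (i z)`. -/
theorem stmt17 (k : ℕ → ℕ) (hk : ∀ j, 0 < k j)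
    (hlim : Tendsto (fun j => Complex.exp (Complex.I * (k j : ℂ))) atTop (𝓝 1)) :
    ∀ K : Set ℂ, IsCompact K →
      TendstoUniformlyOn
        (fun j z => Complex.exp (Complex.exp
          (Complex.I * (Real.pi : ℂ) / 2 + z / (k j : ℂ) + (Real.log (k j) : ℂ))))
        (fun z => Complex.exp (Complex.I * z)) atTop K := by
  intro K hK
  have hparam : Tendsto (fun j => (Complex.exp (Complex.I * k j), ((k j : ℂ))⁻¹)) atTop
      (𝓝 (1, 0)) :=
    hlim.prodMk_nhds <| tendsto_inv_atTop_nhds_zero_nat.comp <|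
      tendsto_atTop_of_tendsto_exp_I_mul_nhds_one hk hlim
  have hcont : Continuous (Function.uncurry fun (p : ℂ × ℂ) z =>
      p.1 * Complex.exp (Complex.I * z * dslope Complex.exp 0 (p.2 * z))) := by
    have := Complex.continuous_dslope_exp
    fun_prop
  convert hK.tendstoUniformlyOn_of_continuous_uncurry hcont hparam using 1
  · funext j z
    have hinner := Complex.exp_I_mul_pi_div_two_add_div_add_log (Nat.cast_pos.mpr (hk j)) z
    rw [Complex.ofReal_natCast] at hinner
    rw [hinner, Complex.exp_I_mul_mul_exp_div (Nat.cast_ne_zero.mpr (hk j).ne')]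
  · funext z
    simp [dslope_same, Complex.deriv_exp]
end
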